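/- arXiv:1610.01686 — 5 statements merged into one kernel-verified Lean document; each statement's English description precedes it below -/
import Mathlib

section
/- The number of partitions that are simultaneously s-core and (s+1)-core and have distinct parts equals the (s+1)-st Fibonacci number F_{s+1} (with F_1 = F_2 = 1). -/
/-- A partition: a weakly decreasing list of positive integers. -/
def IsPartition (l : List ℕ) : Prop :=
  l.Pairwise (· ≥ ·) ∧ ∀ x ∈ l, 0 < x

/-- Hook length at the cell in row `i`, column `j` (0-indexed). -/
def hookLength (l : List ℕ) (i j : ℕ) : ℕ :=
  (l.getD i 0 - j - 1) + ((l.filter (fun x => j < x)).length - i - 1) + 1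

/-- The Young diagram of `l` contains a hook of length `h`. -/
def HasHook (l : List ℕ) (h : ℕ) : Prop :=
  ∃ i j, j < l.getD i 0 ∧ hookLength l i j = h

/-- `l` is an `s`-core: no hook of length `s`. -/
def IsCore (s : ℕ) (l : List ℕ) : Prop := ¬ HasHook l s

/-- The conjugate (transpose) partition. -/
def conjugate (l : List ℕ) : List ℕ :=
  (List.range (l.headD 0)).map (fun j => (l.filter (fun x => j < x)).length)

def SelfConjugate (l : List ℕ) : Prop := conjugate l = l

/-- The staircase partition `(k, k-1, …, 1)`. -/
def staircase (k : ℕ) : List ℕ := (List.range k).map (fun i => k - i)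

/-- The minimal bead set: the set of first-column hook lengths. -/
def beadSet (l : List ℕ) : Finset ℕ :=
  (Finset.range l.length).image (fun i => l.getD i 0 + (l.length - 1 - i))

/-!
The largest hook of a partition `l` sits at the corner cell and has length
`l.headD 0 + l.length - 1`. Along the first row the hook lengths descend from it to `1`, and
when the parts are distinct each step drops by at most `2`, since at most one part equals any
given value. So a distinct-part partition whose corner hook is at least `s` has a first-row hook
of length `s` or `s + 1`; conversely every hook is at most the corner hook. Hence the partitions
counted are exactly the distinct-part partitions with `l.headD 0 + l.length ≤ s`. Sorting these by
whether the bound is attained, and removing the first part when it is, gives the Fibonacci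
recursion.
-/

def columnLength (l : List ℕ) (j : ℕ) : ℕ := (l.filter (fun x => j < x)).length

theorem hookLength_eq (l : List ℕ) (i j : ℕ) :
    hookLength l i j = (l.getD i 0 - j - 1) + (columnLength l j - i - 1) + 1 := rfl

section Partition

variable {l : List ℕ}

theorem le_headD_of_mem (hl : l.Pairwise (· ≥ ·)) {x : ℕ} (hx : x ∈ l) :
    x ≤ l.headD 0 := by
  cases l with
  | nil => simp at hx
  | cons a t =>
    rcases List.mem_cons.mp hx with rfl | hx
    · rfl
    · exact (List.pairwise_cons.mp hl).1 x hx

theorem getD_le_headD (hl : l.Pairwise (· ≥ ·)) (i : ℕ) : l.getD i 0 ≤ l.headD 0 := by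
  rcases Nat.lt_or_ge i l.length with hi | hi
  · rw [List.getD_eq_getElem l 0 hi]
    exact le_headD_of_mem hl (List.getElem_mem hi)
  · rw [List.getD_eq_default l 0 hi]
    exact Nat.zero_le _

theorem hookLength_lt_headD_add_length (hl : l.Pairwise (· ≥ ·)) {i j : ℕ}
    (hij : j < l.getD i 0) : hookLength l i j < l.headD 0 + l.length := by
  have hi : i < l.length := by
    by_contra! hi
    rw [List.getD_eq_default l 0 hi] at hij
    exact Nat.not_lt_zero _ hij
  have := getD_le_headD hl i
  have : columnLength l j ≤ l.length := List.length_filter_le _ _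
  rw [hookLength_eq]
  omega

theorem isCore_of_headD_add_length_le (hl : l.Pairwise (· ≥ ·)) {t : ℕ}
    (ht : l.headD 0 + l.length ≤ t) : IsCore t l := by
  rintro ⟨i, j, hij, rfl⟩
  exact absurd ht (Nat.not_le.mpr (hookLength_lt_headD_add_length hl hij))

theorem columnLength_zero (hpos : ∀ x ∈ l, 0 < x) : columnLength l 0 = l.length := by
  rw [columnLength, List.filter_eq_self.mpr (by simpa using hpos)]

theorem columnLength_headD (hl : l.Pairwise (· ≥ ·)) : columnLength l (l.headD 0) = 0 :=
  List.length_eq_zero_iff.mpr <| List.filter_eq_nil_iff.mpr fun x hx => by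
    simpa using le_headD_of_mem hl hx

theorem columnLength_le_succ_add_one (hl : l.Nodup) (c : ℕ) :
    columnLength l c ≤ columnLength l (c + 1) + 1 := by
  have hcard : ∀ j, columnLength l j = {x ∈ l.toFinset | j < x}.card := fun j => by
    rw [columnLength, ← List.toFinset_card_of_nodup (hl.filter _), List.toFinset_filter]
    simp only [decide_eq_true_eq]
  rw [hcard, hcard]
  calc {x ∈ l.toFinset | c < x}.card
      ≤ (insert (c + 1) {x ∈ l.toFinset | c + 1 < x}).card := by
        refine Finset.card_le_card fun x hx => ?_
        simp only [Finset.mem_filter, Finset.mem_insert] at hx ⊢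
        grind
    _ ≤ _ := Finset.card_insert_le _ _

theorem hookLength_zero_zero (hpos : ∀ x ∈ l, 0 < x) (hne : l ≠ []) :
    hookLength l 0 0 + 1 = l.headD 0 + l.length := by
  obtain ⟨a, t, rfl⟩ := List.exists_cons_of_ne_nil hne
  have ha : 0 < a := hpos a List.mem_cons_self
  rw [hookLength_eq, columnLength_zero hpos]
  simp only [List.getD_cons_zero, List.headD_cons, List.length_cons]
  omega

theorem hookLength_zero_le_succ_add_two (hl : l.Nodup) (c : ℕ) :
    hookLength l 0 c ≤ hookLength l 0 (c + 1) + 2 := by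
  have := columnLength_le_succ_add_one hl c
  rw [hookLength_eq, hookLength_eq]
  omega

theorem hookLength_zero_pred_headD_le_one (hl : l.Pairwise (· ≥ ·)) (hnd : l.Nodup)
    (hhead : 0 < l.headD 0) : hookLength l 0 (l.headD 0 - 1) ≤ 1 := by
  have := columnLength_le_succ_add_one hnd (l.headD 0 - 1)
  rw [Nat.sub_add_cancel hhead, columnLength_headD hl] at this
  rw [hookLength_eq, ← List.headD_eq_getD]
  omega

end Partition

theorem exists_mem_Icc_of_drop_le_two {f : ℕ → ℕ} {s : ℕ} :
    ∀ {n : ℕ}, (∀ c < n, f c ≤ f (c + 1) + 2) → s ≤ f 0 → f n ≤ s + 1 →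
      ∃ c ≤ n, f c ∈ Set.Icc s (s + 1)
  | 0, _, h0, hn => ⟨0, le_rfl, h0, hn⟩
  | n + 1, hstep, h0, hn => by
    by_cases hf : f 0 ≤ s + 1
    · exact ⟨0, Nat.zero_le _, h0, hf⟩
    obtain ⟨c, hc, hfc⟩ := exists_mem_Icc_of_drop_le_two (f := fun c => f (c + 1)) (s := s)
      (n := n) (fun c hc => hstep (c + 1) (by omega)) (by have := hstep 0 (by omega); omega) hn
    exact ⟨c + 1, by omega, hfc⟩

theorem headD_add_length_le_of_isCore {l : List ℕ} {s : ℕ} (hl : IsPartition l) (hnd : l.Nodup)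
    (hs : IsCore s l) (hs' : IsCore (s + 1) l) : l.headD 0 + l.length ≤ s := by
  by_contra! hbig
  have hne : l ≠ [] := by rintro rfl; simp at hbig
  have hhead : 0 < l.headD 0 := by
    obtain ⟨a, t, rfl⟩ := List.exists_cons_of_ne_nil hne
    exact hl.2 a List.mem_cons_self
  have hcorner := hookLength_zero_zero hl.2 hne
  have hlast := hookLength_zero_pred_headD_le_one hl.1 hnd hhead
  obtain ⟨c, hc, hsc, hsc'⟩ := exists_mem_Icc_of_drop_le_two (f := hookLength l 0) (s := s)
    (n := l.headD 0 - 1) (fun c _ => hookLength_zero_le_succ_add_two hnd c) (by omega) (by omega)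
  have hcell : c < l.getD 0 0 := by rw [← List.headD_eq_getD]; omega
  rcases (show hookLength l 0 c = s ∨ hookLength l 0 c = s + 1 by omega) with h | h
  exacts [hs ⟨0, c, hcell, h⟩, hs' ⟨0, c, hcell, h⟩]

theorem isCore_and_isCore_succ_iff {l : List ℕ} {s : ℕ} (hl : IsPartition l) (hnd : l.Nodup) :
    IsCore s l ∧ IsCore (s + 1) l ↔ l.headD 0 + l.length ≤ s :=
  ⟨fun ⟨hs, hs'⟩ => headD_add_length_le_of_isCore hl hnd hs hs',
    fun h => ⟨isCore_of_headD_add_length_le hl.1 h,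
      isCore_of_headD_add_length_le hl.1 (by omega)⟩⟩

theorem isPartition_cons_and_nodup_iff {a : ℕ} {t : List ℕ} :
    IsPartition (a :: t) ∧ (a :: t).Nodup ↔
      0 < a ∧ (∀ x ∈ t, x < a) ∧ IsPartition t ∧ t.Nodup := by
  simp only [IsPartition, List.pairwise_cons, List.mem_cons, List.nodup_cons]
  grind

def distinctPartitionsWithin (s : ℕ) : Set (List ℕ) :=
  {l | IsPartition l ∧ l.Nodup ∧ l.headD 0 + l.length ≤ s}

theorem distinctPartitionsWithin_of_le_one {s : ℕ} (hs : s ≤ 1) :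
    distinctPartitionsWithin s = {[]} := by
  ext l
  refine ⟨fun ⟨hl, _, hle⟩ => ?_, fun h => by
    simp [Set.mem_singleton_iff.mp h, distinctPartitionsWithin, IsPartition]⟩
  cases l with
  | nil => rfl
  | cons a t =>
    have := hl.2 a List.mem_cons_self
    simp only [List.headD_cons, List.length_cons] at hle
    omega

theorem distinctPartitionsWithin_add_two (s : ℕ) :
    distinctPartitionsWithin (s + 2) =
      distinctPartitionsWithin (s + 1) ∪
        (fun t => (s + 1 - t.length) :: t) '' distinctPartitionsWithin s := by
  ext l
  constructor
  · rintro ⟨hl, hnd, hle⟩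
    rcases Nat.lt_or_ge (s + 1) (l.headD 0 + l.length) with hbig | hsmall
    · obtain ⟨a, t, rfl⟩ := List.exists_cons_of_ne_nil (l := l) (by rintro rfl; simp at hbig)
      obtain ⟨-, hlt, ht, htnd⟩ := isPartition_cons_and_nodup_iff.mp ⟨hl, hnd⟩
      simp only [List.headD_cons, List.length_cons] at hle hbig
      refine Or.inr ⟨t, ⟨ht, htnd, ?_⟩, by simp only [show s + 1 - t.length = a by omega]⟩
      cases t with
      | nil => simp
      | cons b u =>
        have := hlt b List.mem_cons_self
        simp only [List.headD_cons, List.length_cons] at hle ⊢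
        omega
    · exact Or.inl ⟨hl, hnd, hsmall⟩
  · rintro (⟨hl, hnd, hle⟩ | ⟨t, ⟨ht, htnd, hle⟩, rfl⟩)
    · exact ⟨hl, hnd, by omega⟩
    · have hlt : ∀ x ∈ t, x < s + 1 - t.length := fun x hx => by
        have := le_headD_of_mem ht.1 hx
        omega
      obtain ⟨hl, hnd⟩ := isPartition_cons_and_nodup_iff.mpr ⟨by omega, hlt, ht, htnd⟩
      refine ⟨hl, hnd, ?_⟩
      simp only [List.headD_cons, List.length_cons]
      omega

theorem encard_distinctPartitionsWithin (s : ℕ) :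
    (distinctPartitionsWithin s).encard = Nat.fib (s + 1) := by
  induction s using Nat.twoStepInduction with
  | zero => simp [distinctPartitionsWithin_of_le_one]
  | one => simp [distinctPartitionsWithin_of_le_one]
  | more s ih ih' =>
    have hdisj : Disjoint (distinctPartitionsWithin (s + 1))
        ((fun t => (s + 1 - t.length) :: t) '' distinctPartitionsWithin s) := by
      rw [Set.disjoint_left]
      rintro _ ⟨_, _, hle⟩ ⟨t, ⟨_, _, ht⟩, rfl⟩
      simp only [List.headD_cons, List.length_cons] at hle
      omega
    have hinj : Function.Injective fun t : List ℕ => (s + 1 - t.length) :: t :=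
      fun _ _ h => (List.cons.inj h).2
    rw [distinctPartitionsWithin_add_two, Set.encard_union_eq hdisj, hinj.encard_image, ih, ih']
    norm_cast
    rw [Nat.fib_add_two (n := s + 1), add_comm]

theorem fib_count_distinct_cores_general (s : ℕ) :
    {l : List ℕ | IsPartition l ∧ l.Nodup ∧ IsCore s l ∧ IsCore (s + 1) l}.ncard
      = Nat.fib (s + 1) := by
  have hset : {l : List ℕ | IsPartition l ∧ l.Nodup ∧ IsCore s l ∧ IsCore (s + 1) l} =
      distinctPartitionsWithin s := by
    ext l
    exact and_congr_right fun hl => and_congr_right fun hnd => isCore_and_isCore_succ_iff hl hnd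
  rw [hset, Set.ncard_def, encard_distinctPartitionsWithin, ENat.toNat_natCast]

theorem fib_count_distinct_cores (s : ℕ) (hs : 1 ≤ s) :
    {l : List ℕ | IsPartition l ∧ l.Nodup ∧ IsCore s l ∧ IsCore (s + 1) l}.ncard
      = Nat.fib (s + 1) :=
  fib_count_distinct_cores_general s
end

section
/- For m, s ≥ 1, let E⁺_m(s) denote the number of partitions with distinct parts that are simultaneously s-core and (ms+1)-core. Then E⁺_m(1) = 1, E⁺_m(2) = m+1, and for s ≥ 3, E⁺_m(s) = E⁺_m(s−1) + m·E⁺_m(s−2). -/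
/-!
Encode a partition `λ` with `k` parts by its bead set `B = {λᵢ + k - 1 - i}` of first-column
hook lengths. The hooks of `λ` correspond to the pairs `b ∈ B`, `x ∉ B` with `x < b`, the hook
length being `b - x`. Hence `λ` is an `s`-core iff `B` is closed under `b ↦ b - s`, and `λ` has
distinct parts iff `B` contains no two consecutive integers.

On the `s`-abacus, a set of positive integers closed under subtracting `s` is determined by the
numbers `c₁, …, c_{s-1}` of beads on the runners `1, …, s - 1`, each runner being filled from the
top. Closure under subtracting `m * s + 1` forces `c_r ≤ m` (a bead at `r + m * s` would give the
consecutive beads `r - 1, r`), and the absence of consecutive beads says that no two adjacent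
runners are both nonempty. So `E⁺ₘ(s)` counts the words of length `s - 1` over `{0, …, m}` with no
two adjacent nonzero letters, and these satisfy the recurrence by splitting on the first letter.
-/

namespace DistinctCore

open Finset

section Hooks

variable {l : List ℕ} {i j : ℕ}

def colLen (l : List ℕ) (j : ℕ) : ℕ := (l.filter (fun x => j < x)).length

def bead (l : List ℕ) (i : ℕ) : ℕ := l.getD i 0 + (l.length - 1 - i)

/-- `gap l j` is the position of the `j`-th non-bead; the hook at `(i, j)` has length
`bead l i - gap l j`. -/
def gap (l : List ℕ) (j : ℕ) : ℕ := j + l.length - colLen l j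

lemma colLen_le_length (l : List ℕ) (j : ℕ) : colLen l j ≤ l.length :=
  List.length_filter_le _ _

lemma colLen_succ_le (l : List ℕ) (j : ℕ) : colLen l (j + 1) ≤ colLen l j :=
  (List.monotone_filter_right l fun _ h =>
    decide_eq_true (Nat.lt_of_succ_lt (of_decide_eq_true h))).length_le

lemma lt_getD_iff_lt_colLen (hl : l.Pairwise (· ≥ ·)) (hi : i < l.length) :
    j < l.getD i 0 ↔ i < colLen l j := by
  induction l generalizing i with
  | nil => simp at hi
  | cons a l ih =>
    rw [List.pairwise_cons] at hl
    by_cases hja : j < a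
    · cases i with
      | zero => simp [colLen, hja]
      | succ i => simpa [colLen, hja] using ih hl.2 (by simpa using hi)
    · have hle : ∀ x ∈ l, x ≤ j := fun x hx => (hl.1 x hx).trans (not_lt.1 hja)
      have hnil : l.filter (fun x => j < x) = [] := List.filter_eq_nil_iff.2 fun x hx => by
        simpa using hle x hx
      cases i with
      | zero => simp [colLen, hja, hnil]
      | succ i =>
        have hi' : i < l.length := by simpa using hi
        simp [colLen, hja, hnil, List.getElem?_eq_getElem hi', hle _ (List.getElem_mem hi')]

lemma getD_le_getD (hl : l.Pairwise (· ≥ ·)) (hij : i ≤ j) :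
    l.getD j 0 ≤ l.getD i 0 := by
  rcases lt_or_ge j l.length with hj | hj
  · rw [List.getD_eq_getElem _ _ hj, List.getD_eq_getElem _ _ (hij.trans_lt hj)]
    exact hl.sortedGE.getElem_ge_getElem_of_le hij
  · rw [List.getD_eq_default _ _ hj]
    exact Nat.zero_le _

lemma lt_length_of_lt_getD (hj : j < l.getD i 0) : i < l.length := by
  by_contra h
  rw [List.getD_eq_default _ _ (not_lt.1 h)] at hj
  exact Nat.not_lt_zero _ hj

lemma mem_beadSet {x : ℕ} : x ∈ beadSet l ↔ ∃ i < l.length, bead l i = x := by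
  simp [beadSet, bead]

lemma bead_strictAntiOn (hl : l.Pairwise (· ≥ ·)) :
    StrictAntiOn (bead l) (Set.Iio l.length) := fun i _ j hj hij => by
  have := getD_le_getD hl hij.le
  simp only [Set.mem_Iio] at hj
  unfold bead
  omega

lemma gap_strictMono (l : List ℕ) : StrictMono (gap l) :=
  strictMono_nat_of_lt_succ fun j => by
    have := colLen_succ_le l j
    have := colLen_le_length l j
    unfold gap
    omega

lemma gap_lt_bead (hl : l.Pairwise (· ≥ ·)) (hi : i < colLen l j) : gap l j < bead l i := by
  have hc := colLen_le_length l j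
  have := (lt_getD_iff_lt_colLen hl (hi.trans_le hc)).2 hi
  unfold gap bead
  omega

lemma bead_lt_gap (hl : l.Pairwise (· ≥ ·)) (hi : colLen l j ≤ i)
    (hik : i < l.length) : bead l i < gap l j := by
  have hc := colLen_le_length l j
  have := (lt_getD_iff_lt_colLen hl hik).not.2 hi.not_gt
  unfold gap bead
  omega

lemma gap_notMem_beadSet (hl : l.Pairwise (· ≥ ·)) (j : ℕ) : gap l j ∉ beadSet l := by
  intro h
  obtain ⟨i, hi, he⟩ := mem_beadSet.1 h
  rcases lt_or_ge i (colLen l j) with hc | hc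
  · exact (gap_lt_bead hl hc).ne' he
  · exact (bead_lt_gap hl hc hi).ne he

lemma gap_lt_bead_iff (hl : l.Pairwise (· ≥ ·)) (hi : i < l.length) :
    gap l j < bead l i ↔ j < l.getD i 0 := by
  rw [lt_getD_iff_lt_colLen hl hi]
  exact ⟨fun h => not_le.1 fun hc => (bead_lt_gap hl hc hi).not_gt h, gap_lt_bead hl⟩

lemma hookLength_add_gap (hl : l.Pairwise (· ≥ ·)) (hj : j < l.getD i 0) :
    hookLength l i j + gap l j = bead l i := by
  have hi := lt_length_of_lt_getD hj
  have := (lt_getD_iff_lt_colLen hl hi).1 hj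
  have := colLen_le_length l j
  unfold hookLength gap bead colLen at *
  omega

/-- Pigeonhole: the `l.length - 1 - i` beads and the `l.getD i 0` gaps below `bead l i` are
distinct, so they fill up `range (bead l i)`. -/
lemma exists_gap_eq (hl : l.Pairwise (· ≥ ·)) {x : ℕ} (hi : i < l.length)
    (hx : x < bead l i) (hxB : x ∉ beadSet l) : ∃ j < l.getD i 0, gap l j = x := by
  set P := (Ioo i l.length).image (bead l)
  set Q := (range (l.getD i 0)).image (gap l)
  have hP : #P = l.length - 1 - i := by
    rw [card_image_of_injOn ((bead_strictAntiOn hl).injOn.mono fun t ht => by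
      simp only [coe_Ioo, Set.mem_Ioo] at ht; exact ht.2), Nat.card_Ioo]
    omega
  have hQ : #Q = l.getD i 0 := by
    rw [card_image_of_injective _ (gap_strictMono l).injective, card_range]
  have hPB : P ⊆ beadSet l := fun y hy => by
    obtain ⟨t, ht, rfl⟩ := mem_image.1 hy
    exact mem_beadSet.2 ⟨t, (mem_Ioo.1 ht).2, rfl⟩
  have hdisj : Disjoint P Q := disjoint_left.2 fun y hyP hyQ => by
    obtain ⟨j, -, rfl⟩ := mem_image.1 hyQ
    exact gap_notMem_beadSet hl j (hPB hyP)
  have hsub : P ∪ Q ⊆ range (bead l i) := union_subset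
    (fun y hy => by
      obtain ⟨t, ht, rfl⟩ := mem_image.1 hy
      exact mem_range.2 (bead_strictAntiOn hl hi (mem_Ioo.1 ht).2 (mem_Ioo.1 ht).1))
    (fun y hy => by
      obtain ⟨j, hj, rfl⟩ := mem_image.1 hy
      exact mem_range.2 ((gap_lt_bead_iff hl hi).2 (mem_range.1 hj)))
  have hfill : P ∪ Q = range (bead l i) := eq_of_subset_of_card_le hsub (by
    rw [card_union_of_disjoint hdisj, hP, hQ, card_range]; unfold bead; omega)
  have hxQ : x ∈ Q := by
    have := hfill ▸ mem_range.2 hx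
    exact (mem_union.1 this).resolve_left fun h => hxB (hPB h)
  obtain ⟨j, hj, rfl⟩ := mem_image.1 hxQ
  exact ⟨j, mem_range.1 hj, rfl⟩

def SubClosed (s : ℕ) (B : Finset ℕ) : Prop := ∀ b ∈ B, s ≤ b → b - s ∈ B

theorem hasHook_iff (hl : l.Pairwise (· ≥ ·)) {s : ℕ} :
    HasHook l s ↔ ∃ b ∈ beadSet l, s ≤ b ∧ b - s ∉ beadSet l := by
  constructor
  · rintro ⟨i, j, hj, rfl⟩
    have := hookLength_add_gap hl hj
    have hi := lt_length_of_lt_getD hj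
    refine ⟨bead l i, mem_beadSet.2 ⟨i, hi, rfl⟩, by omega, ?_⟩
    rw [show bead l i - hookLength l i j = gap l j by omega]
    exact gap_notMem_beadSet hl j
  · rintro ⟨b, hb, hsb, hbs⟩
    obtain ⟨i, hi, rfl⟩ := mem_beadSet.1 hb
    have hs : s ≠ 0 := by rintro rfl; exact hbs (by simpa using hb)
    obtain ⟨j, hj, hgap⟩ := exists_gap_eq hl hi (by omega) hbs
    have := hookLength_add_gap hl hj
    exact ⟨i, j, hj, by omega⟩

theorem isCore_iff (hl : l.Pairwise (· ≥ ·)) {s : ℕ} :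
    IsCore s l ↔ SubClosed s (beadSet l) := by
  simp [IsCore, hasHook_iff hl, SubClosed]

end Hooks

lemma getD_add_le_getD {bs : List ℕ} (hbs : bs.SortedGT) {i j : ℕ} (hij : i ≤ j)
    (hj : j < bs.length) : bs.getD j 0 + (j - i) ≤ bs.getD i 0 := by
  induction j, hij using Nat.le_induction with
  | base => simp
  | succ j hij ih =>
    have hprev := ih (by omega)
    have hstep : bs[j + 1] < bs[j] := hbs.getElem_gt_getElem_of_lt (Nat.lt_succ_self j)
    rw [List.getD_eq_getElem _ _ (by omega : j < bs.length)] at hprev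
    rw [List.getD_eq_getElem _ _ hj]
    omega

def NoConsecutive (B : Finset ℕ) : Prop := ∀ b ∈ B, b + 1 ∉ B

theorem nodup_iff_noConsecutive {l : List ℕ} (hl : l.Pairwise (· ≥ ·)) :
    l.Nodup ↔ NoConsecutive (beadSet l) := by
  constructor
  · intro hnd b hb hb1
    obtain ⟨t', ht', rfl⟩ := mem_beadSet.1 hb
    obtain ⟨t, ht, he⟩ := mem_beadSet.1 hb1
    have htt : t < t' := by
      by_contra h
      exact (bead_strictAntiOn hl).antitoneOn ht' ht (not_lt.1 h) |>.not_gt (by omega)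
    have := getD_add_le_getD (hl.sortedGE.sortedGT_of_nodup hnd) htt.le ht'
    unfold bead at he
    omega
  · intro hB
    refine List.SortedGT.nodup (List.sortedGT_iff_isChain.2 (List.isChain_iff_getElem.2 ?_))
    intro t ht
    by_contra hle
    have := getD_le_getD hl (Nat.le_succ t)
    rw [List.getD_eq_getElem _ _ ht, List.getD_eq_getElem _ _ (by omega)] at this
    refine hB (bead l (t + 1)) (mem_beadSet.2 ⟨t + 1, ht, rfl⟩) (mem_beadSet.2 ⟨t, by omega, ?_⟩)
    rw [bead, bead, List.getD_eq_getElem _ _ ht, List.getD_eq_getElem _ _ (by omega)]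
    omega

def beadList (l : List ℕ) : List ℕ := (List.range l.length).map (bead l)

def unbead (bs : List ℕ) : List ℕ :=
  (List.range bs.length).map fun i => bs.getD i 0 - (bs.length - 1 - i)

def ofBeadSet (B : Finset ℕ) : List ℕ := unbead (B.sort (· ≥ ·))

lemma beadSet_eq_toFinset (l : List ℕ) : beadSet l = (beadList l).toFinset := by
  ext x
  simp [mem_beadSet, beadList]

lemma sortedGT_beadList {l : List ℕ} (hl : l.Pairwise (· ≥ ·)) : (beadList l).SortedGT :=
  List.Pairwise.sortedGT <| List.pairwise_map.2 <| List.pairwise_lt_range.imp_of_mem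
    fun ha hb hab => bead_strictAntiOn hl (by simpa using ha) (by simpa using hb) hab

lemma unbead_beadList (l : List ℕ) : unbead (beadList l) = l := by
  apply List.ext_getElem (by simp [unbead, beadList])
  intro i h1 h2
  simp [unbead, beadList, bead, h2]

lemma beadList_unbead {bs : List ℕ} (hbs : bs.SortedGT) : beadList (unbead bs) = bs := by
  apply List.ext_getElem (by simp [unbead, beadList])
  intro i h1 h2
  have := getD_add_le_getD hbs (Nat.le_sub_one_of_lt h2) (by omega : bs.length - 1 < bs.length)
  simp only [List.getD_eq_getElem?_getD, h2, getElem?_pos, Option.getD_some, beadList, unbead,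
    List.length_map, List.length_range, List.getElem_map, bead, List.getElem_range] at this ⊢
  omega

lemma isPartition_unbead {bs : List ℕ} (hbs : bs.SortedGT) (h0 : 0 ∉ bs) :
    IsPartition (unbead bs) := by
  have hlast : ∀ i < bs.length, bs.length - i ≤ bs.getD i 0 := fun i hi => by
    have := getD_add_le_getD hbs (Nat.le_sub_one_of_lt hi) (by omega : bs.length - 1 < bs.length)
    have : bs.getD (bs.length - 1) 0 ≠ 0 := by
      rw [List.getD_eq_getElem _ _ (by omega)]
      exact fun h => h0 (h ▸ List.getElem_mem _)
    omega
  constructor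
  · refine List.pairwise_map.2 <| List.pairwise_lt_range.imp_of_mem fun hi hj hij => ?_
    simp only [List.mem_range] at hi hj
    have := getD_add_le_getD hbs hij.le hj
    have := hlast _ hj
    omega
  · simp only [unbead, List.mem_map, List.mem_range]
    rintro _ ⟨i, hi, rfl⟩
    have := hlast i hi
    omega

lemma ofBeadSet_beadSet {l : List ℕ} (hl : l.Pairwise (· ≥ ·)) : ofBeadSet (beadSet l) = l := by
  have h := sortedGT_beadList hl
  rw [ofBeadSet, beadSet_eq_toFinset, (List.toFinset_sort _ h.nodup).2 (h.pairwise.imp le_of_lt),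
    unbead_beadList]

lemma beadSet_ofBeadSet (B : Finset ℕ) : beadSet (ofBeadSet B) = B := by
  rw [beadSet_eq_toFinset, ofBeadSet, beadList_unbead (sortedGT_sort B), sort_toFinset]

lemma zero_notMem_beadSet {l : List ℕ} (hl : IsPartition l) : 0 ∉ beadSet l := by
  rw [mem_beadSet]
  rintro ⟨i, hi, h⟩
  have := hl.2 _ (List.getElem_mem hi)
  rw [bead, List.getD_eq_getElem _ _ hi] at h
  omega

theorem ncard_setOf_isPartition (P : Finset ℕ → Prop) :
    {l | IsPartition l ∧ P (beadSet l)}.ncard = {B : Finset ℕ | 0 ∉ B ∧ P B}.ncard := by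
  have himage : {B : Finset ℕ | 0 ∉ B ∧ P B} = beadSet '' {l | IsPartition l ∧ P (beadSet l)} := by
    ext B
    constructor
    · rintro ⟨h0, hP⟩
      refine ⟨ofBeadSet B, ⟨?_, by rwa [beadSet_ofBeadSet]⟩, beadSet_ofBeadSet B⟩
      exact isPartition_unbead (sortedGT_sort B) (by simpa using h0)
    · rintro ⟨l, ⟨hl, hP⟩, rfl⟩
      exact ⟨zero_notMem_beadSet hl, hP⟩
  rw [himage, Set.InjOn.ncard_image]
  intro l hl l' hl' h
  rw [← ofBeadSet_beadSet hl.1.1, h, ofBeadSet_beadSet hl'.1.1]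

def sparseLists (m : ℕ) : ℕ → Finset (List ℕ)
  | 0 => {[]}
  | 1 => (range (m + 1)).image fun a => [a]
  | n + 2 => (sparseLists m (n + 1)).image (0 :: ·) ∪
      (Icc 1 m ×ˢ sparseLists m n).image fun p => p.1 :: 0 :: p.2

lemma isChain_zero_cons {c : List ℕ} :
    (0 :: c).IsChain (fun a b => a = 0 ∨ b = 0) ↔ c.IsChain (fun a b => a = 0 ∨ b = 0) := by
  cases c <;> simp

theorem mem_sparseLists {m n : ℕ} {c : List ℕ} : c ∈ sparseLists m n ↔
    c.length = n ∧ (∀ x ∈ c, x ≤ m) ∧ c.IsChain (fun a b => a = 0 ∨ b = 0) := by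
  induction n using Nat.strong_induction_on generalizing c with
  | _ n ih =>
  match n, c with
  | 0, c => rcases c with _ | ⟨a, c⟩ <;> simp [sparseLists]
  | 1, c => rcases c with _ | ⟨a, _ | ⟨b, c⟩⟩ <;> simp [sparseLists]
  | n + 2, c =>
    rcases c with _ | ⟨a, _ | ⟨b, c⟩⟩
    · simp [sparseLists]
    · simp [sparseLists, ih (n + 1) (by omega)]
    · simp only [sparseLists, mem_union, mem_image, mem_product, mem_Icc, Prod.exists,
        List.cons.injEq, exists_eq_right_right, ↓existsAndEq, and_true, true_and,
        ih n (by omega), ih (n + 1) (by omega)]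
      rcases eq_or_ne b 0 with rfl | hb
      · rcases eq_or_ne a 0 with rfl | ha <;> grind [isChain_zero_cons]
      · grind

theorem card_sparseLists_zero (m : ℕ) : #(sparseLists m 0) = 1 := rfl

theorem card_sparseLists_one (m : ℕ) : #(sparseLists m 1) = m + 1 := by
  rw [sparseLists, card_image_of_injective _ fun a b h => List.singleton_inj.1 h, card_range]

theorem card_sparseLists_add_two (m n : ℕ) :
    #(sparseLists m (n + 2)) = #(sparseLists m (n + 1)) + m * #(sparseLists m n) := by
  rw [sparseLists, card_union_of_disjoint, card_image_of_injective _ (List.cons_injective),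
    card_image_of_injective _ fun p q h => by simp_all [Prod.ext_iff], card_product, Nat.card_Icc,
    Nat.add_sub_cancel]
  refine disjoint_left.2 fun c hc hc' => ?_
  simp only [mem_image, mem_product, mem_Icc] at hc hc'
  obtain ⟨c, -, rfl⟩ := hc
  obtain ⟨⟨a, c'⟩, ⟨⟨ha, -⟩, -⟩, h⟩ := hc'
  simp only [List.cons.injEq] at h
  omega

lemma eq_and_eq_of_add_mul_eq {s a b i j : ℕ} (ha : a < s) (hb : b < s)
    (h : a + i * s = b + j * s) : a = b ∧ i = j := by
  have hab : a = b := by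
    simpa [Nat.add_mul_mod_self_right, Nat.mod_eq_of_lt ha, Nat.mod_eq_of_lt hb] using
      congrArg (· % s) h
  subst hab
  exact ⟨rfl, Nat.eq_of_mul_eq_mul_right (by omega) (Nat.add_left_cancel h)⟩

lemma SubClosed.add_mul_mem {s : ℕ} {B : Finset ℕ} (hB : SubClosed s B) {ρ i j : ℕ}
    (h : ρ + i * s ∈ B) (hji : j ≤ i) : ρ + j * s ∈ B := by
  obtain ⟨d, rfl⟩ := Nat.exists_eq_add_of_le hji
  induction d with
  | zero => simpa using h
  | succ d ih =>
    have he : ρ + (j + (d + 1)) * s = ρ + (j + d) * s + s := by ring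
    rw [he] at h
    exact ih (by simpa using hB _ h (by omega)) (by omega)

noncomputable def runnerLength (s : ℕ) (B : Finset ℕ) (ρ : ℕ) : ℕ := sInf {i | ρ + i * s ∉ B}

lemma SubClosed.add_mul_mem_iff {s : ℕ} {B : Finset ℕ} (hB : SubClosed s B) (hs : 0 < s)
    {ρ i : ℕ} : ρ + i * s ∈ B ↔ i < runnerLength s B ρ := by
  have hne : {i | ρ + i * s ∉ B}.Nonempty := by
    obtain ⟨n, hn⟩ := B.exists_nat_subset_range
    refine ⟨n, fun h => ?_⟩
    have := mem_range.1 (hn h)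
    nlinarith
  constructor
  · exact fun h => not_le.1 fun hle => Nat.sInf_mem hne (hB.add_mul_mem h hle)
  · exact fun h => not_not.1 (Nat.notMem_of_lt_sInf h)

def abacusSet (s : ℕ) (c : List ℕ) : Finset ℕ :=
  (range (s - 1)).biUnion fun r => (range (c.getD r 0)).image fun i => r + 1 + i * s

lemma mem_abacusSet {s x : ℕ} {c : List ℕ} :
    x ∈ abacusSet s c ↔ ∃ r < s - 1, ∃ i < c.getD r 0, r + 1 + i * s = x := by
  simp [abacusSet]

lemma add_mul_mem_abacusSet_iff {s r i : ℕ} {c : List ℕ} (hr : r < s - 1) :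
    r + 1 + i * s ∈ abacusSet s c ↔ i < c.getD r 0 := by
  rw [mem_abacusSet]
  constructor
  · rintro ⟨r', hr', i', hi', he⟩
    obtain ⟨hrr, rfl⟩ := eq_and_eq_of_add_mul_eq (by omega) (by omega) he
    obtain rfl : r' = r := by omega
    exact hi'
  · exact fun hi => ⟨r, hr, i, hi, rfl⟩

lemma zero_notMem_abacusSet (s : ℕ) (c : List ℕ) : 0 ∉ abacusSet s c := by
  simp [mem_abacusSet]

lemma subClosed_abacusSet (s : ℕ) (c : List ℕ) : SubClosed s (abacusSet s c) := by
  intro x hx hsx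
  obtain ⟨r, hr, i, hi, rfl⟩ := mem_abacusSet.1 hx
  rcases i with _ | i
  · rw [zero_mul, add_zero] at hsx
    omega
  refine mem_abacusSet.2 ⟨r, hr, i, by omega, ?_⟩
  rw [add_mul, one_mul]
  omega

lemma getD_le_of_forall_le {c : List ℕ} {m : ℕ} (h : ∀ x ∈ c, x ≤ m) (r : ℕ) : c.getD r 0 ≤ m := by
  rcases lt_or_ge r c.length with hr | hr
  · rw [List.getD_eq_getElem _ _ hr]
    exact h _ (List.getElem_mem hr)
  · rw [List.getD_eq_default _ _ hr]
    exact Nat.zero_le m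

/-- All beads lie below `m * s`, so the condition is vacuous. -/
lemma subClosed_abacusSet_of_le {s m : ℕ} {c : List ℕ} (h : ∀ x ∈ c, x ≤ m) :
    SubClosed (m * s + 1) (abacusSet s c) := by
  intro x hx hmx
  obtain ⟨r, hr, i, hi, rfl⟩ := mem_abacusSet.1 hx
  have : (i + 1) * s ≤ m * s := Nat.mul_le_mul_right s ((getD_le_of_forall_le h r).trans' hi)
  rw [add_mul, one_mul] at this
  omega

lemma getD_eq_zero_or_getD_succ_eq_zero {c : List ℕ}
    (hc : c.IsChain (fun a b => a = 0 ∨ b = 0)) (r : ℕ) :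
    c.getD r 0 = 0 ∨ c.getD (r + 1) 0 = 0 := by
  rcases lt_or_ge (r + 1) c.length with hr | hr
  · rw [List.getD_eq_getElem _ _ hr, List.getD_eq_getElem _ _ (by omega)]
    exact List.isChain_iff_getElem.1 hc r hr
  · exact Or.inr (List.getD_eq_default _ _ hr)

lemma noConsecutive_abacusSet {s : ℕ} {c : List ℕ}
    (hc : c.IsChain (fun a b => a = 0 ∨ b = 0)) : NoConsecutive (abacusSet s c) := by
  intro x hx hx1
  obtain ⟨r, hr, i, hi, rfl⟩ := mem_abacusSet.1 hx
  obtain ⟨r', hr', i', hi', he⟩ := mem_abacusSet.1 hx1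
  rcases lt_or_ge (r + 2) s with hrs | hrs
  · obtain ⟨hrr, rfl⟩ := eq_and_eq_of_add_mul_eq (s := s) (a := r' + 1) (b := r + 2) (i := i')
      (j := i) (by omega) hrs (by omega)
    obtain rfl : r' = r + 1 := by omega
    rcases getD_eq_zero_or_getD_succ_eq_zero hc r with h | h <;> omega
  · have := (eq_and_eq_of_add_mul_eq (s := s) (a := r' + 1) (b := 0) (i := i') (j := i + 1)
      (by omega) (by omega) (by rw [add_mul, one_mul]; omega)).1
    omega

noncomputable def runnerLengths (s : ℕ) (B : Finset ℕ) : List ℕ :=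
  (List.range (s - 1)).map fun r => runnerLength s B (r + 1)

lemma getD_runnerLengths {s r : ℕ} (B : Finset ℕ) (hr : r < s - 1) :
    (runnerLengths s B).getD r 0 = runnerLength s B (r + 1) := by
  simp [runnerLengths, hr]

lemma runnerLengths_abacusSet {s : ℕ} (hs : 0 < s) {c : List ℕ} (hc : c.length = s - 1) :
    runnerLengths s (abacusSet s c) = c := by
  apply List.ext_getElem (by simp [runnerLengths, hc])
  intro r h1 h2
  rw [← List.getD_eq_getElem _ 0 h1, ← List.getD_eq_getElem _ 0 h2,
    getD_runnerLengths _ (by omega)]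
  refine eq_of_forall_lt_iff fun i => ?_
  rw [← (subClosed_abacusSet s c).add_mul_mem_iff hs, add_mul_mem_abacusSet_iff (by omega)]

lemma abacusSet_runnerLengths {s : ℕ} (hs : 0 < s) {B : Finset ℕ} (h0 : 0 ∉ B)
    (hB : SubClosed s B) : abacusSet s (runnerLengths s B) = B := by
  ext x
  rw [mem_abacusSet]
  constructor
  · rintro ⟨r, hr, i, hi, rfl⟩
    rw [getD_runnerLengths B hr] at hi
    exact (hB.add_mul_mem_iff hs).2 hi
  · intro hx
    rw [← Nat.mod_add_div' x s] at hx ⊢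
    have hmod : x % s ≠ 0 := fun h => h0 (by simpa [h] using hB.add_mul_mem hx (Nat.zero_le _))
    have := Nat.mod_lt x hs
    refine ⟨x % s - 1, by omega, x / s, ?_, by omega⟩
    rw [getD_runnerLengths B (by omega), Nat.sub_add_cancel (by omega)]
    exact (hB.add_mul_mem_iff hs).1 hx

lemma runnerLengths_mem_sparseLists {s m : ℕ} (hs : 0 < s) {B : Finset ℕ}
    (hnc : NoConsecutive B) (hsc : SubClosed s B) (htc : SubClosed (m * s + 1) B) :
    runnerLengths s B ∈ sparseLists m (s - 1) := by
  have hrunner : ∀ r, 0 < runnerLength s B (r + 1) → r + 1 ∈ B := fun r h => by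
    simpa using (hsc.add_mul_mem_iff hs (i := 0)).2 h
  refine mem_sparseLists.2 ⟨by simp [runnerLengths], ?_, ?_⟩
  · simp only [runnerLengths, List.mem_map, List.mem_range]
    rintro _ ⟨r, -, rfl⟩
    by_contra! hm
    have htop := htc _ ((hsc.add_mul_mem_iff hs).2 hm) (by omega)
    rw [show r + 1 + m * s - (m * s + 1) = r by omega] at htop
    exact hnc r htop (hrunner r (by omega))
  · refine List.isChain_iff_getElem.2 fun r hr => ?_
    simp only [runnerLengths, List.length_map, List.length_range] at hr
    simp only [runnerLengths, List.getElem_map, List.getElem_range]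
    by_contra! h
    exact hnc (r + 1) (hrunner r (Nat.pos_of_ne_zero h.1))
      (hrunner (r + 1) (Nat.pos_of_ne_zero h.2))

theorem ncard_setOf_subClosed_eq_card_sparseLists {s : ℕ} (hs : 0 < s) (m : ℕ) :
    {B : Finset ℕ | 0 ∉ B ∧ NoConsecutive B ∧ SubClosed s B ∧ SubClosed (m * s + 1) B}.ncard =
      #(sparseLists m (s - 1)) := by
  have himage : {B : Finset ℕ | 0 ∉ B ∧ NoConsecutive B ∧ SubClosed s B ∧
      SubClosed (m * s + 1) B} = abacusSet s '' ↑(sparseLists m (s - 1)) := by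
    ext B
    constructor
    · rintro ⟨h0, hnc, hsc, htc⟩
      exact ⟨runnerLengths s B, runnerLengths_mem_sparseLists hs hnc hsc htc,
        abacusSet_runnerLengths hs h0 hsc⟩
    · rintro ⟨c, hc, rfl⟩
      obtain ⟨-, hle, hchain⟩ := mem_sparseLists.1 hc
      exact ⟨zero_notMem_abacusSet s c, noConsecutive_abacusSet hchain, subClosed_abacusSet s c,
        subClosed_abacusSet_of_le hle⟩
  rw [himage, Set.InjOn.ncard_image, Set.ncard_coe_finset]
  intro c hc c' hc' h
  rw [← runnerLengths_abacusSet hs (mem_sparseLists.1 hc).1, h,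
    runnerLengths_abacusSet hs (mem_sparseLists.1 hc').1]

theorem ncard_distinctCores_eq_card_sparseLists {s : ℕ} (hs : 0 < s) (m : ℕ) :
    {l : List ℕ | IsPartition l ∧ l.Nodup ∧ IsCore s l ∧ IsCore (m * s + 1) l}.ncard =
      #(sparseLists m (s - 1)) := by
  have hset : {l : List ℕ | IsPartition l ∧ l.Nodup ∧ IsCore s l ∧ IsCore (m * s + 1) l} =
      {l | IsPartition l ∧ (NoConsecutive (beadSet l) ∧ SubClosed s (beadSet l) ∧
        SubClosed (m * s + 1) (beadSet l))} := by
    ext l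
    exact and_congr_right fun hl => by
      rw [nodup_iff_noConsecutive hl.1, isCore_iff hl.1, isCore_iff hl.1]
  rw [hset, ncard_setOf_isPartition (fun B =>
    NoConsecutive B ∧ SubClosed s B ∧ SubClosed (m * s + 1) B)]
  exact ncard_setOf_subClosed_eq_card_sparseLists hs m

end DistinctCore

theorem Eplus_recurrence_general (m : ℕ) :
    let E : ℕ → ℕ := fun s =>
      {l : List ℕ | IsPartition l ∧ l.Nodup ∧ IsCore s l ∧ IsCore (m * s + 1) l}.ncard
    E 1 = 1 ∧ E 2 = m + 1 ∧ ∀ s, 3 ≤ s → E s = E (s - 1) + m * E (s - 2) := by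
  intro E
  have hE : ∀ s, 0 < s → E s = (DistinctCore.sparseLists m (s - 1)).card := fun s hs =>
    DistinctCore.ncard_distinctCores_eq_card_sparseLists hs m
  refine ⟨?_, ?_, fun s hs => ?_⟩
  · rw [hE 1 one_pos]
    exact DistinctCore.card_sparseLists_zero m
  · rw [hE 2 two_pos]
    exact DistinctCore.card_sparseLists_one m
  · obtain ⟨n, rfl⟩ : ∃ n, s = n + 3 := ⟨s - 3, by omega⟩
    rw [hE _ (by omega), hE _ (by omega), hE _ (by omega)]
    exact DistinctCore.card_sparseLists_add_two m n

theorem Eplus_recurrence (m : ℕ) (hm : 1 ≤ m) :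
    let E : ℕ → ℕ := fun s =>
      {l : List ℕ | IsPartition l ∧ l.Nodup ∧ IsCore s l ∧ IsCore (m * s + 1) l}.ncard
    E 1 = 1 ∧ E 2 = m + 1 ∧ ∀ s, 3 ≤ s → E s = E (s - 1) + m * E (s - 2) :=
  Eplus_recurrence_general m
end

section
/- For m, s ≥ 1, the counts of simultaneous core partitions with distinct parts satisfy E⁻_m(s) = E⁺_m(s−1) + (m−1)·E⁺_m(s−2) for s ≥ 3, where E⁻_m(s) counts distinct-part partitions that are both s-core and (ms−1)-core, and E⁺_m(s) counts distinct-part partitions that are both s-core and (ms+1)-core. -/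
/-!
A partition with distinct parts is determined by its beads (first-column hook lengths), and these
can be any finite set of positive integers without two consecutive members; the partition is a
`q`-core exactly when its bead set is closed under `b ↦ b - q`. For such bead sets, being an
`(ms - 1)`-core as well means that all beads are `≤ ms - 2`, and being an `(ms + 1)`-core means
that all beads are `≤ ms - 1`.

On the `s`-abacus (bead `b` on runner `b % s` at level `b / s`) runner `0` is then empty, every
runner is filled from the bottom and no two neighbouring runners are both occupied, so only the
number of beads on each runner matters and the count does not change when the beads are moved to
an abacus with more or fewer runners. Sort the bead sets counted by `E⁻_m(s)` by the number
`v < m` of beads on the last runner `s - 1`. For `v = 0` the beads fill runners `1, …, s - 2` up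
to level `m - 1`, which is the configuration counted by `E⁺_m(s - 1)`; for each of the `m - 1`
values `v ≥ 1` runner `s - 2` is empty, and the remaining runners `1, …, s - 3` carry a
configuration counted by `E⁺_m(s - 2)`.
-/

namespace Abacus

variable {l : List ℕ}

def colLength (l : List ℕ) (j : ℕ) : ℕ := (l.filter (fun x => j < x)).length

def beta (l : List ℕ) (i : ℕ) : ℕ := l.getD i 0 + (l.length - 1 - i)

/-- For a partition, `gap l j` is the `j`-th natural number missing from `beadSet l`. -/
def gap (l : List ℕ) (j : ℕ) : ℕ := j + (l.length - colLength l j)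

theorem colLength_le_length (l : List ℕ) (j : ℕ) : colLength l j ≤ l.length :=
  List.length_filter_le _ _

theorem colLength_eq_zero {j : ℕ} (h : ∀ x ∈ l, x ≤ j) : colLength l j = 0 := by
  simpa [colLength, List.filter_eq_nil_iff] using h

theorem colLength_cons (a : ℕ) (t : List ℕ) (j : ℕ) :
    colLength (a :: t) j = colLength t j + if j < a then 1 else 0 := by
  by_cases h : j < a <;> simp [colLength, h]

theorem lt_getD_iff_lt_colLength (hl : l.Pairwise (· ≥ ·)) {i : ℕ}
    (hi : i < l.length) (j : ℕ) : j < l.getD i 0 ↔ i < colLength l j := by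
  induction l generalizing i with
  | nil => simp at hi
  | cons a t ih =>
    rw [List.pairwise_cons] at hl
    rw [colLength_cons]
    by_cases hja : j < a
    · rcases i with _ | i
      · simp [hja]
      · simpa [hja] using ih hl.2 (i := i) (by simpa using hi)
    · have hcol : colLength t j = 0 := colLength_eq_zero fun x hx => by
        have := hl.1 x hx; omega
      rcases i with _ | i
      · simp [hcol, hja]
      · have hi : i < t.length := by simpa using hi
        have : t.getD i 0 ≤ a :=
          hl.1 _ (by rw [List.getD_eq_getElem _ _ hi]; exact List.getElem_mem _)
        simp only [List.getD_cons_succ, hcol, hja, if_false]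
        omega

theorem beta_lt_gap (hl : l.Pairwise (· ≥ ·)) {k j : ℕ} (hk : k < l.length)
    (h : l.getD k 0 ≤ j) : beta l k < gap l j := by
  have := (lt_getD_iff_lt_colLength hl hk j).not.mp (by omega)
  unfold beta gap
  omega

theorem gap_lt_beta (hl : l.Pairwise (· ≥ ·)) {k j : ℕ} (hk : k < l.length)
    (h : j < l.getD k 0) : gap l j < beta l k := by
  have := (lt_getD_iff_lt_colLength hl hk j).mp h
  unfold beta gap
  omega

theorem beta_ne_gap (hl : l.Pairwise (· ≥ ·)) {k : ℕ} (hk : k < l.length) (j : ℕ) :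
    beta l k ≠ gap l j := by
  rcases le_or_gt (l.getD k 0) j with h | h
  · exact (beta_lt_gap hl hk h).ne
  · exact (gap_lt_beta hl hk h).ne'

theorem hookLength_eq (hl : l.Pairwise (· ≥ ·)) {i j : ℕ} (hi : i < l.length)
    (hj : j < l.getD i 0) : hookLength l i j = beta l i - gap l j := by
  have := (lt_getD_iff_lt_colLength hl hi j).mp hj
  have := colLength_le_length l j
  unfold hookLength beta gap colLength at *
  omega

theorem mem_beadSet : ∀ {b : ℕ}, b ∈ beadSet l ↔ ∃ i < l.length, beta l i = b := by
  simp [beadSet, beta]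

theorem gap_zero (hpos : ∀ x ∈ l, 0 < x) : gap l 0 = 0 := by
  have : colLength l 0 = l.length := List.length_filter_eq_length_iff.mpr (by simpa using hpos)
  simp [gap, this]

theorem exists_gap_eq (hl : IsPartition l) {g : ℕ} (hg : g ∉ beadSet l) : ∃ j, gap l j = g := by
  classical
  have hex : ∃ j, g < gap l (j + 1) :=
    ⟨g, (Nat.lt_succ_self g).trans_le (Nat.le_add_right _ _)⟩
  obtain ⟨j, hgj, hmin⟩ : ∃ j, g < gap l (j + 1) ∧ ∀ j' < j, ¬ g < gap l (j' + 1) :=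
    ⟨Nat.find hex, Nat.find_spec hex, fun _ => Nat.find_min hex⟩
  have hjg : gap l j ≤ g := by
    rcases j with _ | j
    · simp [gap_zero hl.2]
    · exact not_lt.mp (hmin j j.lt_succ_self)
  refine ⟨j, hjg.antisymm (not_lt.mp fun hlt => hg ?_)⟩
  -- `g` lies strictly between two consecutive gaps, so it is the bead of row `j + l.length - g`.
  have := colLength_le_length l j
  unfold gap at hlt hgj
  have hk : j + l.length - g < l.length := by omega
  have h1 := (lt_getD_iff_lt_colLength hl.1 hk j).mpr (by omega)
  have h2 := (lt_getD_iff_lt_colLength hl.1 hk (j + 1)).not.mpr (by omega)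
  exact mem_beadSet.mpr ⟨_, hk, by unfold beta; omega⟩

def SubClosed (s : ℕ) (B : Finset ℕ) : Prop := ∀ b ∈ B, s ≤ b → b - s ∈ B

theorem isCore_iff_subClosed (hl : IsPartition l) (s : ℕ) :
    IsCore s l ↔ SubClosed s (beadSet l) := by
  constructor
  · intro hcore b hb hsb
    by_contra hns
    obtain ⟨i, hi, rfl⟩ := mem_beadSet.mp hb
    obtain ⟨j, hj⟩ := exists_gap_eq hl hns
    have hs : s ≠ 0 := by rintro rfl; exact hns hb
    have hji : j < l.getD i 0 := by
      by_contra h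
      have := beta_lt_gap hl.1 hi (not_lt.mp h)
      omega
    exact hcore ⟨i, j, hji, by rw [hookLength_eq hl.1 hi hji, hj]; omega⟩
  · rintro hcl ⟨i, j, hj, rfl⟩
    have hi : i < l.length := by
      by_contra h
      rw [List.getD_eq_default _ _ (not_lt.mp h)] at hj
      omega
    have hlt := gap_lt_beta hl.1 hi hj
    rw [hookLength_eq hl.1 hi hj] at hcl
    obtain ⟨k, hk, hbk⟩ := mem_beadSet.mp (hcl _ (mem_beadSet.mpr ⟨i, hi, rfl⟩) (by omega))
    exact beta_ne_gap hl.1 hk j (by omega)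

def NoConsec (B : Finset ℕ) : Prop := ∀ b ∈ B, b + 1 ∉ B

theorem NoConsec.mono {B C : Finset ℕ} (hB : NoConsec B) (h : C ⊆ B) : NoConsec C :=
  fun b hb hb1 => hB b (h hb) (h hb1)

theorem beadSet_cons (a : ℕ) (t : List ℕ) :
    beadSet (a :: t) = insert (a + t.length) (beadSet t) := by
  rw [beadSet, List.length_cons, Finset.range_add_one', Finset.image_insert, Finset.map_eq_image,
    Finset.image_image]
  congr 1
  refine Finset.image_congr fun i _ => ?_
  change (a :: t).getD (i + 1) 0 + (t.length - (i + 1)) = _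
  rw [List.getD_cons_succ]
  omega

theorem add_one_lt_of_mem_beadSet {c : ℕ} (h : ∀ x ∈ l, x < c) :
    ∀ b ∈ beadSet l, b + 1 < c + l.length := by
  induction l with
  | nil => simp [beadSet]
  | cons a t ih =>
    simp only [List.mem_cons, forall_eq_or_imp] at h
    simp only [beadSet_cons, Finset.mem_insert, forall_eq_or_imp, List.length_cons]
    exact ⟨by omega, fun b hb => by have := ih h.2 b hb; omega⟩

theorem zero_notMem_beadSet (h : ∀ x ∈ l, 0 < x) : 0 ∉ beadSet l := by
  induction l with
  | nil => simp [beadSet]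
  | cons a t ih =>
    simp only [List.mem_cons, forall_eq_or_imp] at h
    simp only [beadSet_cons, Finset.mem_insert, not_or]
    exact ⟨by omega, ih h.2⟩

theorem noConsec_beadSet (hl : l.Pairwise (· > ·)) : NoConsec (beadSet l) := by
  induction l with
  | nil => simp [NoConsec, beadSet]
  | cons a t ih =>
    rw [List.pairwise_cons] at hl
    have htop := add_one_lt_of_mem_beadSet hl.1
    intro b hb hb1
    simp only [beadSet_cons, Finset.mem_insert] at hb hb1
    rcases hb with rfl | hb
    · rcases hb1 with h | h
      · omega
      · have := htop _ h; omega
    · rcases hb1 with h | h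
      · have := htop _ hb; omega
      · exact ih hl.2 b hb h

theorem eq_of_beadSet_eq {l' : List ℕ} (hl : l.Pairwise (· > ·)) (hl' : l'.Pairwise (· > ·))
    (h : beadSet l = beadSet l') : l = l' := by
  induction l generalizing l' with
  | nil => cases l' <;> simp_all [beadSet]
  | cons a t ih =>
    rcases l' with _ | ⟨a', t'⟩
    · simp [beadSet] at h
    rw [List.pairwise_cons] at hl hl'
    rw [beadSet_cons, beadSet_cons] at h
    have ht := add_one_lt_of_mem_beadSet hl.1
    have ht' := add_one_lt_of_mem_beadSet hl'.1
    have hnot : a + t.length ∉ beadSet t := fun h => by have := ht _ h; omega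
    have hnot' : a' + t'.length ∉ beadSet t' := fun h => by have := ht' _ h; omega
    have htop : a + t.length = a' + t'.length := by
      have h1 := h ▸ Finset.mem_insert_self (a + t.length) (beadSet t)
      have h2 := h.symm ▸ Finset.mem_insert_self (a' + t'.length) (beadSet t')
      rw [Finset.mem_insert] at h1 h2
      rcases h1 with h1 | h1
      · exact h1
      rcases h2 with h2 | h2
      · exact h2.symm
      have := ht _ h2
      have := ht' _ h1
      omega
    have hrest : beadSet t = beadSet t' := by
      rw [← Finset.erase_insert hnot, h, htop, Finset.erase_insert hnot']
    obtain rfl := ih hl.2 hl'.2 hrest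
    obtain rfl : a = a' := by omega
    rfl

theorem exists_beadSet_eq {B : Finset ℕ} (h0 : 0 ∉ B) (hB : NoConsec B) :
    ∃ l : List ℕ, l.Pairwise (· > ·) ∧ (∀ x ∈ l, 0 < x) ∧ beadSet l = B := by
  induction B using Finset.induction_on_max with
  | empty => exact ⟨[], by simp, by simp, rfl⟩
  | insert a S hlt ih =>
    obtain ⟨l, hl, hpos, rfl⟩ :=
      ih (fun h => h0 (Finset.mem_insert_of_mem h)) (hB.mono (Finset.subset_insert _ _))
    have ha : a ≠ 0 := fun h => h0 (h ▸ Finset.mem_insert_self _ _)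
    -- `a - 1` is not a bead, so the new first part `a - l.length` exceeds the old one
    have hhead : ∀ x ∈ l, x + l.length < a := by
      rcases l with _ | ⟨b, t⟩
      · simp
      have hb : b + t.length ∈ beadSet (b :: t) := by
        rw [beadSet_cons]; exact Finset.mem_insert_self _ _
      have h1 := hlt _ hb
      have h2 : b + t.length + 1 ≠ a := fun h =>
        hB _ (Finset.mem_insert_of_mem hb) (h ▸ Finset.mem_insert_self _ _)
      rw [List.pairwise_cons] at hl
      simp only [List.mem_cons, forall_eq_or_imp, List.length_cons]
      exact ⟨by omega, fun x hx => by have := hl.1 x hx; omega⟩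
    have hlen : l.length < a := by
      rcases l with _ | ⟨b, t⟩
      · simpa using Nat.pos_of_ne_zero ha
      · have := hhead b (by simp); omega
    refine ⟨(a - l.length) :: l, ?_, ?_, ?_⟩
    · exact List.pairwise_cons.mpr ⟨fun x hx => by have := hhead x hx; omega, hl⟩
    · simpa [List.mem_cons, forall_eq_or_imp] using ⟨by omega, hpos⟩
    · rw [beadSet_cons, Nat.sub_add_cancel hlen.le]

theorem isPartition_and_nodup_iff :
    IsPartition l ∧ l.Nodup ↔ l.Pairwise (· > ·) ∧ ∀ x ∈ l, 0 < x := by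
  rw [IsPartition, List.Nodup, and_right_comm, ← List.pairwise_and_iff]
  refine and_congr_left' (List.Pairwise.iff fun a b => ?_)
  omega

theorem ncard_strictCores (q t : ℕ) :
    {l : List ℕ | IsPartition l ∧ l.Nodup ∧ IsCore q l ∧ IsCore t l}.ncard =
      {B : Finset ℕ | 0 ∉ B ∧ NoConsec B ∧ SubClosed q B ∧ SubClosed t B}.ncard := by
  rw [← Set.InjOn.ncard_image (f := beadSet) fun l hl l' hl' h =>
    eq_of_beadSet_eq (isPartition_and_nodup_iff.mp ⟨hl.1, hl.2.1⟩).1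
      (isPartition_and_nodup_iff.mp ⟨hl'.1, hl'.2.1⟩).1 h]
  congr 1
  ext B
  simp only [Set.mem_image]
  constructor
  · rintro ⟨l, ⟨hl, hnd, hq, ht⟩, rfl⟩
    obtain ⟨hdec, hpos⟩ := isPartition_and_nodup_iff.mp ⟨hl, hnd⟩
    exact ⟨zero_notMem_beadSet hpos, noConsec_beadSet hdec,
      (isCore_iff_subClosed hl q).mp hq, (isCore_iff_subClosed hl t).mp ht⟩
  · rintro ⟨h0, hB, hq, ht⟩
    obtain ⟨l, hdec, hpos, rfl⟩ := exists_beadSet_eq h0 hB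
    obtain ⟨hl, hnd⟩ := isPartition_and_nodup_iff.mpr ⟨hdec, hpos⟩
    exact ⟨l, ⟨hl, hnd, (isCore_iff_subClosed hl q).mpr hq, (isCore_iff_subClosed hl t).mpr ht⟩,
      rfl⟩

section SubClosed

variable {q : ℕ} {B : Finset ℕ}

theorem SubClosed.sub_mul_mem (hc : SubClosed q B) {b : ℕ} (hb : b ∈ B) :
    ∀ k, k * q ≤ b → b - k * q ∈ B
  | 0, _ => by simpa using hb
  | k + 1, hk => by
    rw [Nat.succ_mul] at hk ⊢
    rw [← Nat.sub_sub]
    exact hc _ (hc.sub_mul_mem hb k (by omega)) (by omega)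

theorem SubClosed.mod_mem (hc : SubClosed q B) {b : ℕ} (hb : b ∈ B) : b % q ∈ B := by
  have := hc.sub_mul_mem hb (b / q) (Nat.div_mul_le_self b q)
  rwa [← Nat.mod_eq_sub_div_mul] at this

theorem SubClosed.mod_ne_zero (hc : SubClosed q B) (h0 : 0 ∉ B) {b : ℕ} (hb : b ∈ B) :
    b % q ≠ 0 :=
  fun h => h0 (h ▸ hc.mod_mem hb)

theorem SubClosed.filter_mod (hc : SubClosed q B) (p : ℕ → Prop) [DecidablePred p] :
    SubClosed q (B.filter fun b => p (b % q)) := by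
  intro b hb hqb
  rw [Finset.mem_filter] at hb ⊢
  refine ⟨hc b hb.1 hqb, ?_⟩
  rw [← Nat.add_mod_right, Nat.sub_add_cancel hqb]
  exact hb.2

end SubClosed

section Bounds

variable {m s : ℕ} {B : Finset ℕ}

theorem le_mul_sub_two_of_subClosed (hms : 0 < m * s) (h0 : 0 ∉ B) (hB : NoConsec B)
    (hs : SubClosed s B) (hms1 : SubClosed (m * s - 1) B) {b : ℕ} (hb : b ∈ B) : b ≤ m * s - 2 := by
  by_contra hlt
  have h1 := hms1 b hb (by omega)
  rcases (show m * s - 1 ≤ b by omega).eq_or_lt with he | hlt'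
  · exact h0 (by rwa [← he, Nat.sub_self] at h1)
  · refine hB _ (hs.sub_mul_mem hb m (by omega)) ?_
    rwa [show b - m * s + 1 = b - (m * s - 1) by omega]

theorem le_mul_sub_one_of_subClosed (h0 : 0 ∉ B) (hB : NoConsec B) (hs : SubClosed s B)
    (hms1 : SubClosed (m * s + 1) B) {b : ℕ} (hb : b ∈ B) : b ≤ m * s - 1 := by
  by_contra hlt
  have h1 := hs.sub_mul_mem hb m (by omega)
  rcases (show m * s ≤ b by omega).eq_or_lt with he | hlt'
  · exact h0 (by rwa [← he, Nat.sub_self] at h1)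
  · refine hB _ (hms1 b hb (by omega)) ?_
    rwa [show b - (m * s + 1) + 1 = b - m * s by omega]

end Bounds

instance (B : Finset ℕ) : Decidable (NoConsec B) :=
  inferInstanceAs (Decidable (∀ b ∈ B, b + 1 ∉ B))

instance (q : ℕ) (B : Finset ℕ) : Decidable (SubClosed q B) :=
  inferInstanceAs (Decidable (∀ b ∈ B, q ≤ b → b - q ∈ B))

/-- On the `q`-abacus the bead `b` sits on runner `b % q` at level `b / q`. -/
def OnRunners (q R J : ℕ) (B : Finset ℕ) : Prop := ∀ b ∈ B, 1 ≤ b % q ∧ b % q ≤ R ∧ b / q ≤ J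

instance (q R J : ℕ) (B : Finset ℕ) : Decidable (OnRunners q R J B) :=
  inferInstanceAs (Decidable (∀ b ∈ B, 1 ≤ b % q ∧ b % q ≤ R ∧ b / q ≤ J))

def abacusSets (q R J : ℕ) : Finset (Finset ℕ) :=
  (Finset.range (R + J * q + 1)).powerset.filter fun B =>
    OnRunners q R J B ∧ NoConsec B ∧ SubClosed q B

section Rebase

variable {q t r j R J : ℕ} {B : Finset ℕ}

theorem le_of_onRunners (h : OnRunners q R J B) {b : ℕ} (hb : b ∈ B) : b ≤ R + J * q := by
  obtain ⟨-, hr, hj⟩ := h b hb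
  have := Nat.mod_add_div' b q
  have := Nat.mul_le_mul_right q hj
  omega

theorem mem_abacusSets :
    B ∈ abacusSets q R J ↔ OnRunners q R J B ∧ NoConsec B ∧ SubClosed q B := by
  rw [abacusSets, Finset.mem_filter, Finset.mem_powerset, and_iff_right_iff_imp]
  exact fun h b hb => Finset.mem_range_succ_iff.mpr (le_of_onRunners h.1 hb)

theorem add_mul_mod_div (hr : r < q) : (r + j * q) % q = r ∧ (r + j * q) / q = j := by
  rw [Nat.add_mul_mod_self_right, Nat.mod_eq_of_lt hr, Nat.add_mul_div_right _ _ (by omega),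
    Nat.div_eq_of_lt hr, zero_add]
  exact ⟨rfl, rfl⟩

theorem add_mul_inj {r' j' : ℕ} (hr : r < q) (hr' : r' < q) (h : r + j * q = r' + j' * q) :
    r = r' ∧ j = j' := by
  have := add_mul_mod_div (j := j) hr
  have := add_mul_mod_div (j := j') hr'
  constructor <;> simp_all

/-- Moves every bead to the same runner and level of the `t`-abacus. -/
def rebase (q t b : ℕ) : ℕ := b % q + b / q * t

theorem rebase_add_mul (hr : r < q) : rebase q t (r + j * q) = r + j * t := by
  rw [rebase, (add_mul_mod_div hr).1, (add_mul_mod_div hr).2]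

theorem rebase_mod_div {b : ℕ} (hb : b % q < t) :
    rebase q t b % t = b % q ∧ rebase q t b / t = b / q :=
  add_mul_mod_div hb

theorem rebase_rebase {b : ℕ} (hb : b % q < t) : rebase t q (rebase q t b) = b :=
  (rebase_add_mul hb).trans (Nat.mod_add_div' b q)

theorem rebase_add (hq : 0 < q) (b : ℕ) : rebase q t (b + q) = rebase q t b + t := by
  simp only [rebase, Nat.add_mod_right, Nat.add_div_right _ hq, Nat.succ_mul]
  omega

theorem onRunners_image_rebase (hR : R < t) (h : OnRunners q R J B) :
    OnRunners t R J (B.image (rebase q t)) := by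
  simp only [OnRunners, Finset.forall_mem_image]
  intro b hb
  obtain ⟨hmod, hdiv⟩ := rebase_mod_div (t := t) (show b % q < t by have := h b hb; omega)
  rw [hmod, hdiv]
  exact h b hb

theorem noConsec_image_rebase (hR : R < t) (h : OnRunners q R J B) (hB : NoConsec B) :
    NoConsec (B.image (rebase q t)) := by
  rintro _ hx hx1
  obtain ⟨b, hb, rfl⟩ := Finset.mem_image.mp hx
  obtain ⟨b', hb', he⟩ := Finset.mem_image.mp hx1
  obtain ⟨h1, h2, -⟩ := h b hb
  obtain ⟨h1', h2', -⟩ := h b' hb'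
  unfold rebase at he
  rcases (show b % q + 1 ≤ t by omega).eq_or_lt with hlast | hlt
  · -- past the last runner of the `t`-abacus comes runner `0`, which carries no beads
    have := add_mul_inj (q := t) (j' := b / q + 1) (show b' % q < t by omega) (show 0 < t by omega)
      (by rw [he, Nat.succ_mul]; omega)
    omega
  · obtain ⟨hr, hj⟩ := add_mul_inj (q := t) (show b' % q < t by omega) hlt
      (show b' % q + b' / q * t = b % q + 1 + b / q * t by omega)
    apply hB b hb
    rwa [← Nat.mod_add_div' b' q, hr, hj, add_right_comm, Nat.mod_add_div'] at hb'

theorem subClosed_image_rebase (hq : 0 < q) (hR : R < t) (h : OnRunners q R J B)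
    (hc : SubClosed q B) : SubClosed t (B.image (rebase q t)) := by
  simp only [SubClosed, Finset.forall_mem_image]
  intro b hb htb
  have hqb : q ≤ b := by
    by_contra hbq
    rw [rebase, Nat.div_eq_of_lt (not_le.mp hbq)] at htb
    have := h b hb
    omega
  have := rebase_add (t := t) hq (b - q)
  rw [Nat.sub_add_cancel hqb] at this
  exact Finset.mem_image.mpr ⟨b - q, hc b hb hqb, by omega⟩

theorem image_rebase_image_rebase (hR : R < t) (h : OnRunners q R J B) :
    (B.image (rebase q t)).image (rebase t q) = B := by
  rw [Finset.image_image]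
  conv_rhs => rw [← Finset.image_id (s := B)]
  exact Finset.image_congr fun b hb => rebase_rebase (by have := h b hb; omega)

theorem image_rebase_mem_abacusSets (hq : 0 < q) (hR : R < t) (hB : B ∈ abacusSets q R J) :
    B.image (rebase q t) ∈ abacusSets t R J := by
  obtain ⟨h, hnc, hc⟩ := mem_abacusSets.mp hB
  exact mem_abacusSets.mpr ⟨onRunners_image_rebase hR h, noConsec_image_rebase hR h hnc,
    subClosed_image_rebase hq hR h hc⟩

theorem card_abacusSets_eq (hq : R < q) (ht : R < t) :
    (abacusSets q R J).card = (abacusSets t R J).card :=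
  Finset.card_nbij' (·.image (rebase q t)) (·.image (rebase t q))
    (fun _ hB => image_rebase_mem_abacusSets (by omega) ht hB)
    (fun _ hB => image_rebase_mem_abacusSets (by omega) hq hB)
    (fun _ hB => image_rebase_image_rebase ht (mem_abacusSets.mp hB).1)
    (fun _ hB => image_rebase_image_rebase hq (mem_abacusSets.mp hB).1)

end Rebase

section Runners

variable {q r : ℕ} {B : Finset ℕ}

/-- The lowest `v` positions of runner `r` on the `q`-abacus. -/
def runnerBeads (q r v : ℕ) : Finset ℕ := (Finset.range v).image (r + · * q)

theorem card_runnerBeads (hr : r < q) (v : ℕ) : (runnerBeads q r v).card = v := by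
  rw [runnerBeads, Finset.card_image_of_injective _ fun i j h => (add_mul_inj hr hr h).2,
    Finset.card_range]

theorem mod_eq_of_mem_runnerBeads (hr : r < q) {v x : ℕ} (hx : x ∈ runnerBeads q r v) :
    x % q = r := by
  obtain ⟨j, -, rfl⟩ := Finset.mem_image.mp hx
  exact (add_mul_mod_div hr).1

theorem subClosed_runnerBeads (hr : r < q) (v : ℕ) : SubClosed q (runnerBeads q r v) := by
  intro x hx hqx
  obtain ⟨j, hj, rfl⟩ := Finset.mem_image.mp hx
  rcases j with _ | j
  · omega
  · refine Finset.mem_image.mpr ⟨j, ?_, by rw [Nat.succ_mul]; omega⟩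
    simp only [Finset.mem_range] at hj ⊢
    omega

theorem eq_range_card_of_forall_le_mem {J : Finset ℕ} (hJ : ∀ j ∈ J, ∀ i ≤ j, i ∈ J) :
    J = Finset.range J.card := by
  refine Finset.eq_of_subset_of_card_le (fun j hj => Finset.mem_range.mpr ?_) (by simp)
  simpa using Finset.card_le_card (s := Finset.range (j + 1))
    fun i hi => hJ j hj i (Finset.mem_range_succ_iff.mp hi)

def runnerCount (q r : ℕ) (B : Finset ℕ) : ℕ := (B.filter (· % q = r)).card

theorem SubClosed.filter_mod_eq_runnerBeads (hc : SubClosed q B) (hr : r < q) :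
    B.filter (· % q = r) = runnerBeads q r (runnerCount q r B) := by
  set F := B.filter (· % q = r)
  set J := F.image (· / q)
  have hF : J.image (r + · * q) = F := by
    rw [Finset.image_image]
    conv_rhs => rw [← Finset.image_id (s := F)]
    refine Finset.image_congr fun b hb => ?_
    simp only [Function.comp_apply, id, ← (Finset.mem_filter.mp hb).2, Nat.mod_add_div']
  have hJ : J = Finset.range J.card := eq_range_card_of_forall_le_mem fun j hj i hij => by
    have hjB := (Finset.mem_filter.mp (hF ▸ Finset.mem_image_of_mem _ hj : r + j * q ∈ F)).1
    have := Nat.mul_le_mul_right q hij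
    have hiB := hc.sub_mul_mem hjB (j - i) (by rw [Nat.sub_mul]; omega)
    rw [show r + j * q - (j - i) * q = r + i * q by rw [Nat.sub_mul]; omega] at hiB
    exact Finset.mem_image.mpr
      ⟨r + i * q, Finset.mem_filter.mpr ⟨hiB, (add_mul_mod_div hr).1⟩, (add_mul_mod_div hr).2⟩
  have hcard : F.card = J.card := by
    rw [← hF, Finset.card_image_of_injective _ fun i j h => (add_mul_inj hr hr h).2]
  rw [runnerCount, hcard, runnerBeads, ← hJ, hF]

theorem runnerCount_union_runnerBeads (hr : r < q) (hB : ∀ b ∈ B, b % q ≠ r) {v : ℕ} :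
    runnerCount q r (B ∪ runnerBeads q r v) = v := by
  rw [runnerCount, Finset.filter_union, Finset.filter_false_of_mem hB,
    Finset.filter_true_of_mem fun x hx => mod_eq_of_mem_runnerBeads hr hx, Finset.empty_union,
    card_runnerBeads hr]

theorem filter_union_runnerBeads (hr : r < q) (hB : ∀ b ∈ B, b % q ≠ r) {v : ℕ} :
    (B ∪ runnerBeads q r v).filter (· % q ≠ r) = B := by
  rw [Finset.filter_union, Finset.filter_true_of_mem hB,
    Finset.filter_false_of_mem fun x hx => not_not.mpr (mod_eq_of_mem_runnerBeads hr hx),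
    Finset.union_empty]

theorem noConsec_union_runnerBeads {R J : ℕ} (hR : R + 2 < q) (h : OnRunners q R J B)
    (hB : NoConsec B) {v : ℕ} : NoConsec (B ∪ runnerBeads q (q - 1) v) := by
  intro b hb hb1
  rcases Finset.mem_union.mp hb with hb | hb
  · rcases Finset.mem_union.mp hb1 with hb1 | hb1
    · exact hB b hb hb1
    · obtain ⟨j, -, hj⟩ := Finset.mem_image.mp hb1
      have := (add_mul_mod_div (j := j) (show q - 2 < q by omega)).1
      rw [show q - 2 + j * q = b by omega] at this
      have := (h b hb).2.1
      omega
  · obtain ⟨j, -, rfl⟩ := Finset.mem_image.mp hb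
    have hmod : (q - 1 + j * q + 1) % q = 0 := by
      rw [show q - 1 + j * q + 1 = (j + 1) * q by rw [Nat.succ_mul]; omega, Nat.mul_mod_left]
    rcases Finset.mem_union.mp hb1 with hb1 | hb1
    · have := (h _ hb1).1
      omega
    · have := mod_eq_of_mem_runnerBeads (show q - 1 < q by omega) hb1
      omega

end Runners

def coreBeadSets (q N : ℕ) : Finset (Finset ℕ) :=
  (Finset.Icc 1 N).powerset.filter fun B => NoConsec B ∧ SubClosed q B

section Counting

variable {m s : ℕ} {B : Finset ℕ}

theorem mem_coreBeadSets {q N : ℕ} :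
    B ∈ coreBeadSets q N ↔ (∀ b ∈ B, 1 ≤ b ∧ b ≤ N) ∧ NoConsec B ∧ SubClosed q B := by
  simp [coreBeadSets, Finset.subset_iff]

theorem pred_mul_add_self (hm : 0 < m) : (m - 1) * s + s = m * s := by
  rw [← Nat.succ_mul, Nat.succ_eq_add_one, Nat.sub_add_cancel hm]

theorem onRunners_of_lt_mul (hs : 0 < s) (h0 : 0 ∉ B) (hc : SubClosed s B)
    (hB : ∀ b ∈ B, b < m * s) : OnRunners s (s - 1) (m - 1) B := fun b hb =>
  ⟨Nat.pos_of_ne_zero (hc.mod_ne_zero h0 hb), Nat.le_sub_one_of_lt (Nat.mod_lt b hs),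
    Nat.le_sub_one_of_lt ((Nat.div_lt_iff_lt_mul hs).mpr (hB b hb))⟩

theorem setOf_eq_coreBeadSets (hm : 0 < m) (hs : 0 < s) :
    {B : Finset ℕ | 0 ∉ B ∧ NoConsec B ∧ SubClosed s B ∧ SubClosed (m * s - 1) B} =
      coreBeadSets s (m * s - 2) := by
  have hms : 0 < m * s := Nat.mul_pos hm hs
  ext B
  simp only [Set.mem_ofPred, Finset.mem_coe, mem_coreBeadSets]
  constructor
  · rintro ⟨h0, hB, hcs, hcms⟩
    refine ⟨fun b hb => ⟨Nat.pos_of_ne_zero fun hb0 => h0 (hb0 ▸ hb),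
      le_mul_sub_two_of_subClosed hms h0 hB hcs hcms hb⟩, hB, hcs⟩
  · rintro ⟨hN, hB, hcs⟩
    exact ⟨fun h => by have := hN 0 h; omega, hB, hcs, fun b hb _ => by have := hN b hb; omega⟩

theorem setOf_eq_abacusSets (hm : 0 < m) (hs : 0 < s) :
    {B : Finset ℕ | 0 ∉ B ∧ NoConsec B ∧ SubClosed s B ∧ SubClosed (m * s + 1) B} =
      abacusSets s (s - 1) (m - 1) := by
  ext B
  simp only [Set.mem_ofPred, Finset.mem_coe, mem_abacusSets]
  constructor
  · rintro ⟨h0, hB, hcs, hcms⟩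
    refine ⟨onRunners_of_lt_mul hs h0 hcs fun b hb => ?_, hB, hcs⟩
    have := le_mul_sub_one_of_subClosed h0 hB hcs hcms hb
    have := Nat.mul_pos hm hs
    omega
  · rintro ⟨h, hB, hcs⟩
    refine ⟨fun h0 => by simpa using (h 0 h0).1, hB, hcs, fun b hb _ => ?_⟩
    have := le_of_onRunners h hb
    have := pred_mul_add_self (s := s) hm
    omega

theorem runnerCount_lt (hm : 0 < m) (hs : 0 < s) (hB : B ∈ coreBeadSets s (m * s - 2)) :
    runnerCount s (s - 1) B < m := by
  obtain ⟨hN, -, hc⟩ := mem_coreBeadSets.mp hB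
  by_contra h
  have hmem : s - 1 + (m - 1) * s ∈ B.filter (· % s = s - 1) := by
    rw [hc.filter_mod_eq_runnerBeads (by omega)]
    exact Finset.mem_image_of_mem _ (Finset.mem_range.mpr (by omega))
  have := hN _ (Finset.mem_filter.mp hmem).1
  have := pred_mul_add_self (s := s) hm
  omega

theorem filter_runnerCount_eq_zero (hm : 0 < m) (hs : 2 ≤ s) :
    (coreBeadSets s (m * s - 2)).filter (runnerCount s (s - 1) · = 0) =
      abacusSets s (s - 2) (m - 1) := by
  ext B
  simp only [Finset.mem_filter, mem_coreBeadSets, mem_abacusSets, runnerCount,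
    Finset.card_eq_zero, Finset.filter_eq_empty_iff]
  constructor
  · rintro ⟨⟨hN, hB, hc⟩, hlast⟩
    have h0 : 0 ∉ B := fun h => by have := hN 0 h; omega
    have hr := onRunners_of_lt_mul (m := m) (by omega) h0 hc fun b hb => by
      have := hN b hb; omega
    exact ⟨fun b hb => by have := hr b hb; have := hlast hb; omega, hB, hc⟩
  · rintro ⟨h, hB, hc⟩
    refine ⟨⟨fun b hb => ⟨?_, ?_⟩, hB, hc⟩, fun b hb => ?_⟩
    · have := (h b hb).1
      have := Nat.mod_le b s
      omega
    · have := le_of_onRunners h hb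
      have := pred_mul_add_self (s := s) hm
      omega
    · have := (h b hb).2.1
      omega

theorem filter_mod_ne_mem_abacusSets (hm : 0 < m) (hs : 3 ≤ s)
    (hB : B ∈ coreBeadSets s (m * s - 2)) (hv : 0 < runnerCount s (s - 1) B) :
    B.filter (· % s ≠ s - 1) ∈ abacusSets s (s - 3) (m - 1) := by
  obtain ⟨hN, hnc, hc⟩ := mem_coreBeadSets.mp hB
  have h0 : 0 ∉ B := fun h => by have := hN 0 h; omega
  have hr := onRunners_of_lt_mul (m := m) (by omega) h0 hc fun b hb => by
    have := hN b hb; omega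
  have hlast : s - 1 ∈ B := by
    have : s - 1 + 0 * s ∈ B.filter (· % s = s - 1) := by
      rw [hc.filter_mod_eq_runnerBeads (by omega)]
      exact Finset.mem_image_of_mem _ (Finset.mem_range.mpr hv)
    simpa using (Finset.mem_filter.mp this).1
  refine mem_abacusSets.mpr ⟨fun b hb => ?_, hnc.mono (Finset.filter_subset _ _),
    hc.filter_mod (· ≠ s - 1)⟩
  obtain ⟨hb, hne⟩ := Finset.mem_filter.mp hb
  -- runner `s - 2` is empty because position `s - 1` carries a bead
  have hne' : b % s ≠ s - 2 := fun h =>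
    hnc _ (hc.mod_mem hb) (by rw [h, show s - 2 + 1 = s - 1 by omega]; exact hlast)
  have := hr b hb
  omega

theorem union_runnerBeads_mem_coreBeadSets (hm : 0 < m) (hs : 3 ≤ s) {v : ℕ} (hvm : v < m)
    (hB : B ∈ abacusSets s (s - 3) (m - 1)) :
    B ∪ runnerBeads s (s - 1) v ∈ coreBeadSets s (m * s - 2) := by
  obtain ⟨h, hnc, hc⟩ := mem_abacusSets.mp hB
  have hmul := pred_mul_add_self (s := s) hm
  refine mem_coreBeadSets.mpr ⟨fun b hb => ?_, ?_, ?_⟩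
  · rcases Finset.mem_union.mp hb with hb | hb
    · have := le_of_onRunners h hb
      have := (h b hb).1
      have := Nat.mod_le b s
      omega
    · obtain ⟨j, hj, rfl⟩ := Finset.mem_image.mp hb
      have := Nat.mul_le_mul_right s (show j + 1 ≤ m - 1 by simp at hj; omega)
      rw [Nat.succ_mul] at this
      omega
  · exact noConsec_union_runnerBeads (by omega) h hnc
  · intro b hb hsb
    rcases Finset.mem_union.mp hb with hb | hb
    · exact Finset.mem_union_left _ (hc b hb hsb)
    · exact Finset.mem_union_right _ (subClosed_runnerBeads (by omega) v b hb hsb)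

theorem card_filter_runnerCount_eq (hm : 0 < m) (hs : 3 ≤ s) {v : ℕ} (hv : 0 < v) (hvm : v < m) :
    ((coreBeadSets s (m * s - 2)).filter (runnerCount s (s - 1) · = v)).card =
      (abacusSets s (s - 3) (m - 1)).card := by
  have hlast : s - 1 < s := by omega
  have hoff : ∀ B ∈ abacusSets s (s - 3) (m - 1), ∀ b ∈ B, b % s ≠ s - 1 := fun B hB b hb => by
    have := ((mem_abacusSets.mp hB).1 b hb).2.1
    omega
  refine Finset.card_nbij' (·.filter (· % s ≠ s - 1)) (· ∪ runnerBeads s (s - 1) v)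
    (fun B hB => ?_) (fun B hB => ?_) (fun B hB => ?_) (fun B hB => ?_)
  · obtain ⟨hBc, hBv⟩ := Finset.mem_filter.mp hB
    exact filter_mod_ne_mem_abacusSets hm hs hBc (hBv ▸ hv)
  · exact Finset.mem_filter.mpr ⟨union_runnerBeads_mem_coreBeadSets hm hs hvm hB,
      runnerCount_union_runnerBeads hlast (hoff B hB)⟩
  · obtain ⟨hBc, hBv⟩ := Finset.mem_filter.mp hB
    change B.filter (· % s ≠ s - 1) ∪ runnerBeads s (s - 1) v = B
    rw [← hBv, ← (mem_coreBeadSets.mp hBc).2.2.filter_mod_eq_runnerBeads hlast, Finset.union_comm,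
      Finset.filter_union_filter_not_eq]
  · exact filter_union_runnerBeads hlast (hoff B hB)

theorem card_coreBeadSets (hm : 0 < m) (hs : 3 ≤ s) :
    (coreBeadSets s (m * s - 2)).card =
      (abacusSets s (s - 2) (m - 1)).card + (m - 1) * (abacusSets s (s - 3) (m - 1)).card := by
  rw [Finset.card_eq_sum_card_fiberwise fun B hB =>
    Finset.mem_range.mpr (runnerCount_lt hm (by omega) hB)]
  obtain ⟨k, rfl⟩ := Nat.exists_eq_add_one.mpr hm
  rw [Finset.sum_range_succ', filter_runnerCount_eq_zero hm (by omega),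
    Finset.sum_congr rfl fun v hv =>
      card_filter_runnerCount_eq hm hs v.succ_pos (by simpa using Finset.mem_range.mp hv),
    Finset.sum_const, Finset.card_range, smul_eq_mul, Nat.add_sub_cancel, add_comm]

end Counting

end Abacus

open Abacus

theorem Eminus_eq_Eplus_combination (m : ℕ) (hm : 1 ≤ m) :
    let Eminus : ℕ → ℕ := fun s =>
      {l : List ℕ | IsPartition l ∧ l.Nodup ∧ IsCore s l ∧ IsCore (m * s - 1) l}.ncard
    let Eplus : ℕ → ℕ := fun s =>
      {l : List ℕ | IsPartition l ∧ l.Nodup ∧ IsCore s l ∧ IsCore (m * s + 1) l}.ncard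
    ∀ s, 3 ≤ s → Eminus s = Eplus (s - 1) + (m - 1) * Eplus (s - 2) := by
  intro Eminus Eplus s hs
  have hminus : Eminus s = (coreBeadSets s (m * s - 2)).card := by
    rw [← Set.ncard_coe_finset, ← setOf_eq_coreBeadSets hm (by omega), ← ncard_strictCores]
  have hplus : ∀ t, 0 < t → Eplus t = (abacusSets t (t - 1) (m - 1)).card := fun t ht => by
    rw [← Set.ncard_coe_finset, ← setOf_eq_abacusSets hm ht, ← ncard_strictCores]
  rw [hminus, hplus (s - 1) (by omega), hplus (s - 2) (by omega), card_coreBeadSets hm hs,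
    card_abacusSets_eq (q := s) (t := s - 1) (by omega) (by omega),
    card_abacusSets_eq (q := s) (t := s - 2) (by omega) (by omega), Nat.sub_sub, Nat.sub_sub]
end

section
/- If gcd(s,t) = 1, then every hook length occurring in an (s,t)-core partition is at most st − s − t. -/
/-! Encode a partition `λ` with `n` parts by its beads `λᵢ + (n - 1 - i)`, the hook lengths of the
first column. The hook lengths of `λ` are then exactly the differences `b - c` with `b` a bead and
`c < b` not a bead, so `λ` is an `s`-core iff its bead set is closed under subtracting `s`. An
`(s, t)`-core therefore has a bead set closed under subtracting every element of the numerical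
semigroup `⟨s, t⟩`, and every `h > st - s - t` lies in it (Sylvester's Frobenius number). -/

theorem Nat.sub_mem_of_mem_closure {A S : Set ℕ}
    (hS : ∀ a ∈ A, ∀ b ∈ S, a ≤ b → b - a ∈ S) {a : ℕ} (ha : a ∈ AddSubmonoid.closure A) :
    ∀ b ∈ S, a ≤ b → b - a ∈ S := by
  induction ha using AddSubmonoid.closure_induction with
  | mem a ha => exact hS a ha
  | zero => simp
  | add a₁ a₂ _ _ ih₁ ih₂ =>
    intro b hb hab
    rw [Nat.sub_add_eq]
    exact ih₂ _ (ih₁ b hb (by omega)) (by omega)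

theorem Nat.mem_closure_pair_of_mul_sub_sub_lt {s t n : ℕ} (hst : s.Coprime t)
    (hn : s * t - s - t < n) : n ∈ AddSubmonoid.closure {s, t} := by
  by_cases h : 1 < s ∧ 1 < t
  · by_contra hmem
    exact hn.not_ge ((frobeniusNumber_pair hst h.1 h.2).2 hmem)
  have hone : 1 ∈ AddSubmonoid.closure ({s, t} : Set ℕ) := by
    have : s = 1 ∨ t = 1 := by
      rcases (by omega : s = 0 ∨ s = 1 ∨ t = 0 ∨ t = 1) with rfl | rfl | rfl | rfl
      exacts [.inr (Nat.coprime_zero_left t |>.mp hst), .inl rfl,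
        .inl (Nat.coprime_zero_right s |>.mp hst), .inr rfl]
    rcases this with rfl | rfl <;> exact AddSubmonoid.subset_closure (by simp)
  simpa using AddSubmonoid.nsmul_mem _ hone n

theorem getD_le_getD_of_le {l : List ℕ} (hl : l.Pairwise (· ≥ ·)) {i k : ℕ} (hik : i ≤ k) :
    l.getD k 0 ≤ l.getD i 0 := by
  rcases lt_or_ge k l.length with hk | hk
  · rcases hik.eq_or_lt with rfl | hik
    · rfl
    rw [List.getD_eq_getElem _ _ hk, List.getD_eq_getElem _ _ (hik.trans hk)]
    exact List.pairwise_iff_getElem.mp hl i k _ hk hik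
  · rw [List.getD_eq_default _ _ hk]
    exact Nat.zero_le _

theorem lt_length_of_lt_getD {l : List ℕ} {i j : ℕ} (hj : j < l.getD i 0) : i < l.length := by
  by_contra! hi
  rw [List.getD_eq_default _ _ hi] at hj
  exact Nat.not_lt_zero _ hj

theorem columnLength_le_length (l : List ℕ) (j : ℕ) : columnLength l j ≤ l.length :=
  List.length_filter_le _ _

theorem lt_columnLength_iff {l : List ℕ} (hl : l.Pairwise (· ≥ ·)) {j k : ℕ} (hk : k < l.length) :
    k < columnLength l j ↔ j < l.getD k 0 := by
  induction l generalizing k with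
  | nil => simp at hk
  | cons a l ih =>
    have hle : ∀ x ∈ l, x ≤ a := fun x hx => List.rel_of_pairwise_cons hl hx
    by_cases hja : j < a
    · cases k with
      | zero => simp [columnLength, hja]
      | succ k =>
        simpa [columnLength, hja] using ih hl.of_cons (by simpa using hk)
    · have hnil : (a :: l).filter (fun x => j < x) = [] := by
        simp only [List.filter_eq_nil_iff, decide_eq_true_eq, not_lt]
        grind
      have : (a :: l).getD k 0 ≤ a := by
        simpa using getD_le_getD_of_le hl (Nat.zero_le k)
      simp only [columnLength, hnil, List.length_nil]
      omega

def bead (l : List ℕ) (i : ℕ) : ℕ := l.getD i 0 + (l.length - 1 - i)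

theorem mem_beadSet {l : List ℕ} {b : ℕ} : b ∈ beadSet l ↔ ∃ i < l.length, bead l i = b := by
  simp [beadSet, bead]

theorem bead_mem_beadSet {l : List ℕ} {i : ℕ} (hi : i < l.length) : bead l i ∈ beadSet l :=
  mem_beadSet.mpr ⟨i, hi, rfl⟩

theorem gap_not_mem_beadSet {l : List ℕ} (hl : l.Pairwise (· ≥ ·)) (j : ℕ) :
    j + (l.length - columnLength l j) ∉ beadSet l := by
  rintro hmem
  obtain ⟨k, hk, hbk⟩ := mem_beadSet.mp hmem
  have := columnLength_le_length l j
  have := lt_columnLength_iff hl (j := j) hk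
  unfold bead at hbk
  omega

theorem hookLength_add_gap {l : List ℕ} (hl : l.Pairwise (· ≥ ·)) {i j : ℕ}
    (hj : j < l.getD i 0) :
    hookLength l i j + (j + (l.length - columnLength l j)) = bead l i := by
  have hi := lt_length_of_lt_getD hj
  have := columnLength_le_length l j
  have := (lt_columnLength_iff hl hi).mpr hj
  unfold hookLength bead
  unfold columnLength at *
  omega

theorem columnLength_eq_of_forall_iff {l : List ℕ} (hl : l.Pairwise (· ≥ ·)) {j m : ℕ}
    (hm : m ≤ l.length) (h : ∀ k < l.length, j < l.getD k 0 ↔ k < m) : columnLength l j = m := by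
  have := columnLength_le_length l j
  have hm_iff := lt_columnLength_iff hl (j := j) (k := m)
  have hcol_iff := lt_columnLength_iff hl (j := j) (k := columnLength l j)
  have := h m
  have := h (columnLength l j)
  omega

theorem bead_le_bead_of_le {l : List ℕ} (hl : l.Pairwise (· ≥ ·)) {i k : ℕ} (hik : i ≤ k) :
    bead l k ≤ bead l i := by
  have := getD_le_getD_of_le hl hik
  unfold bead
  omega

theorem hasHook_of_sub_not_mem_beadSet {l : List ℕ} (hl : l.Pairwise (· ≥ ·)) {i h : ℕ}
    (hi : i < l.length) (hh : 0 < h) (hhb : h ≤ bead l i) (hc : bead l i - h ∉ beadSet l) :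
    HasHook l h := by
  obtain ⟨c, hcdef⟩ : ∃ c, c = bead l i - h := ⟨_, rfl⟩
  rw [← hcdef] at hc
  have hex : ∃ k, bead l k ≤ c := ⟨l.length, by simp [bead]⟩
  -- `m` counts the beads above `c`; the hook lies in column `c - (n - m)`.
  obtain ⟨m, hmn, hbm, hlt_m⟩ : ∃ m ≤ l.length, bead l m ≤ c ∧ ∀ k < m, c < bead l k :=
    ⟨Nat.find hex, Nat.find_min' hex (by simp [bead]), Nat.find_spec hex,
      fun k hk => not_le.mp (Nat.find_min hex hk)⟩
  have him : i < m := by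
    by_contra! hmi
    have := bead_le_bead_of_le hl hmi
    omega
  have hbm_lt : m < l.length → bead l m < c := fun hm =>
    lt_of_le_of_ne hbm fun heq => hc (heq ▸ bead_mem_beadSet hm)
  have hcm : l.length - m ≤ c := by
    rcases hmn.lt_or_eq with hm | hm
    · have := hbm_lt hm
      unfold bead at this
      omega
    · omega
  obtain ⟨j, hj⟩ : ∃ j, j = c - (l.length - m) := ⟨_, rfl⟩
  have hcol : ∀ k < l.length, j < l.getD k 0 ↔ k < m := by
    intro k hk
    constructor
    · intro hjk
      by_contra! hmk
      have := getD_le_getD_of_le hl hmk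
      have := hbm_lt (by omega)
      unfold bead at this
      omega
    · intro hkm
      have := getD_le_getD_of_le hl (by omega : k ≤ m - 1)
      have := hlt_m (m - 1) (by omega)
      unfold bead at this
      omega
  have hji : j < l.getD i 0 := (hcol i hi).mpr him
  refine ⟨i, j, hji, ?_⟩
  have := hookLength_add_gap hl hji
  rw [columnLength_eq_of_forall_iff hl hmn hcol] at this
  omega

theorem IsCore.sub_mem_beadSet {s : ℕ} {l : List ℕ} (hl : l.Pairwise (· ≥ ·)) (hcore : IsCore s l)
    {b : ℕ} (hb : b ∈ beadSet l) (hsb : s ≤ b) : b - s ∈ beadSet l := by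
  rcases Nat.eq_zero_or_pos s with rfl | hs
  · simpa using hb
  by_contra hgap
  obtain ⟨i, hi, rfl⟩ := mem_beadSet.mp hb
  exact hcore (hasHook_of_sub_not_mem_beadSet hl hi hs hsb hgap)

theorem hook_bound_of_coprime_core_general (s t : ℕ)
    (hst : Nat.gcd s t = 1) (l : List ℕ) (hl : IsPartition l)
    (h1 : IsCore s l) (h2 : IsCore t l) :
    ∀ i j, j < l.getD i 0 → hookLength l i j ≤ s * t - s - t := by
  intro i j hj
  by_contra! hbig
  have hcore : ∀ a ∈ ({s, t} : Set ℕ), ∀ b ∈ (beadSet l : Set ℕ), a ≤ b → b - a ∈ beadSet l := by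
    rintro a (rfl | rfl)
    exacts [fun b => h1.sub_mem_beadSet hl.1, fun b => h2.sub_mem_beadSet hl.1]
  have hsum := hookLength_add_gap hl.1 hj
  have hgap := Nat.sub_mem_of_mem_closure hcore (Nat.mem_closure_pair_of_mul_sub_sub_lt hst hbig)
    (bead l i) (bead_mem_beadSet (lt_length_of_lt_getD hj)) (by omega)
  rw [← hsum, Nat.add_sub_cancel_left] at hgap
  exact gap_not_mem_beadSet hl.1 j hgap

theorem hook_bound_of_coprime_core (s t : ℕ) (hs : 0 < s) (ht : 0 < t)
    (hst : Nat.gcd s t = 1) (l : List ℕ) (hl : IsPartition l)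
    (h1 : IsCore s l) (h2 : IsCore t l) :
    ∀ i j, j < l.getD i 0 → hookLength l i j ≤ s * t - s - t :=
  hook_bound_of_coprime_core_general s t hst l hl h1 h2
end

section
/- A partition is self-conjugate with distinct parts if and only if it is a 2-core partition, i.e., a staircase partition of the form (k, k−1, …, 2, 1) for some k ≥ 0. -/
/-!
The conjugate of any list is a partition all of whose parts are at most the length of the list,
so a self-conjugate `l` is a partition with parts in `{1, …, l.length}`. If these parts are
distinct, `l` is a permutation of the staircase of the same length, and being sorted it equals
it. Conversely the staircase is self-conjugate, and its hook at `(i, j)` has the odd length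
`2 (k - i - j - 1) + 1`, so it has no hook of length 2.
-/

lemma le_length_of_mem_conjugate {l : List ℕ} {x : ℕ} (hx : x ∈ conjugate l) :
    x ≤ l.length := by
  obtain ⟨j, -, rfl⟩ := List.mem_map.1 hx
  exact List.length_filter_le _ _

lemma isPartition_conjugate (l : List ℕ) : IsPartition (conjugate l) := by
  refine ⟨List.pairwise_map.2 (List.pairwise_lt_range.imp fun hij => ?_), ?_⟩
  · simp only [← List.countP_eq_length_filter]
    exact List.countP_mono_left fun x _ hx => by simp only [decide_eq_true_eq] at hx ⊢; omega
  · simp only [conjugate, List.mem_map, List.mem_range, forall_exists_index, and_imp]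
    rintro _ j hj rfl
    cases l with
    | nil => simp at hj
    | cons a t =>
      exact List.length_pos_of_mem (List.mem_filter.2 ⟨List.mem_cons_self, by simpa using hj⟩)

lemma SelfConjugate.isPartition {l : List ℕ} (hl : SelfConjugate l) : IsPartition l :=
  hl ▸ isPartition_conjugate l

lemma SelfConjugate.le_length_of_mem {l : List ℕ} (hl : SelfConjugate l) {x : ℕ}
    (hx : x ∈ l) : x ≤ l.length :=
  le_length_of_mem_conjugate (hl.symm ▸ hx)

lemma staircase_zero : staircase 0 = [] := rfl

lemma staircase_succ (k : ℕ) : staircase (k + 1) = (k + 1) :: staircase k := by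
  simp [staircase, List.range_succ_eq_map, Function.comp_def]

lemma length_staircase (k : ℕ) : (staircase k).length = k := by simp [staircase]

lemma mem_staircase {k x : ℕ} : x ∈ staircase k ↔ 0 < x ∧ x ≤ k := by
  induction k with
  | zero => simp only [staircase_zero, List.not_mem_nil, false_iff]; omega
  | succ k ih => rw [staircase_succ, List.mem_cons, ih]; omega

lemma nodup_staircase (k : ℕ) : (staircase k).Nodup := by
  induction k with
  | zero => simp [staircase_zero]
  | succ k ih => exact staircase_succ k ▸ List.nodup_cons.2 ⟨by simp [mem_staircase], ih⟩

lemma getD_staircase (k i : ℕ) : (staircase k).getD i 0 = k - i := by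
  induction k generalizing i with
  | zero => simp [staircase_zero]
  | succ k ih =>
    cases i with
    | zero => simp [staircase_succ]
    | succ i => rw [staircase_succ, List.getD_cons_succ, ih]; omega

lemma length_filter_staircase (k j : ℕ) :
    ((staircase k).filter (fun x => j < x)).length = k - j := by
  induction k with
  | zero => simp [staircase_zero]
  | succ k ih =>
    simp only [staircase_succ, List.filter_cons, decide_eq_true_eq]
    split_ifs <;> simp only [List.length_cons, ih] <;> omega

lemma conjugate_staircase (k : ℕ) : conjugate (staircase k) = staircase k := by
  have hhead : (staircase k).headD 0 = k := by cases k <;> simp [staircase_zero, staircase_succ]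
  simp only [conjugate, hhead, length_filter_staircase]
  rfl

lemma isPartition_staircase (k : ℕ) : IsPartition (staircase k) :=
  conjugate_staircase k ▸ isPartition_conjugate _

lemma hookLength_staircase (k i j : ℕ) :
    hookLength (staircase k) i j = 2 * (k - i - j - 1) + 1 := by
  simp only [hookLength, getD_staircase, length_filter_staircase]
  omega

lemma isCore_two_staircase (k : ℕ) : IsCore 2 (staircase k) := by
  rintro ⟨i, j, -, h⟩
  rw [hookLength_staircase] at h
  omega

lemma IsPartition.eq_staircase_of_nodup {l : List ℕ} (hl : IsPartition l) (hnd : l.Nodup)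
    (hle : ∀ x ∈ l, x ≤ l.length) : l = staircase l.length := by
  have hsub : l.Subperm (staircase l.length) :=
    List.subperm_of_subset hnd fun x hx => mem_staircase.2 ⟨hl.2 x hx, hle x hx⟩
  have hperm := hsub.perm_of_length_le (length_staircase _).le
  exact hperm.eq_of_pairwise' hl.1 (isPartition_staircase _).1

theorem selfConjugate_distinct_iff_two_core_general (l : List ℕ) :
    (SelfConjugate l ∧ l.Nodup) ↔ (IsCore 2 l ∧ ∃ k, l = staircase k) := by
  constructor
  · rintro ⟨hsc, hnd⟩
    have hst := hsc.isPartition.eq_staircase_of_nodup hnd fun _ => hsc.le_length_of_mem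
    exact ⟨hst ▸ isCore_two_staircase _, _, hst⟩
  · rintro ⟨-, k, rfl⟩
    exact ⟨conjugate_staircase k, nodup_staircase k⟩

theorem selfConjugate_distinct_iff_two_core (l : List ℕ) (hl : IsPartition l) :
    (SelfConjugate l ∧ l.Nodup) ↔ (IsCore 2 l ∧ ∃ k, l = staircase k) :=
  selfConjugate_distinct_iff_two_core_general l
end
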